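/- arXiv:1005.3045 — 6 statements merged into one kernel-verified Lean document; each statement's English description precedes it below -/
import Mathlib

section
/- If Γ is a zero-sum game and Σ ⊆ Δ(C_M) is good, then the closed convex hull of Σ contains a maximin strategy of Γ, i.e. clconv(Σ) ∩ maximin(Γ) ≠ ∅. -/
open Finset
open scoped Classical BigOperators

/-- Expected payoff of the maximizer in a finite two-player zero-sum game with
maximizer utility `u`, when the maximizer plays the mixed strategy `σ` and the
minimizer plays the mixed strategy `θ` (utilities extended by linearity). -/
noncomputable def expPay {A B : Type*} [Fintype A] [Fintype B] (u : A → B → ℝ)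
    (σ : A → ℝ) (θ : B → ℝ) : ℝ :=
  ∑ a, ∑ b, σ a * θ b * u a b

/-- The (minimax) value of the zero-sum game with maximizer utility `u`. -/
noncomputable def gameValue {A B : Type*} [Fintype A] [Fintype B] (u : A → B → ℝ) : ℝ :=
  ⨆ σ : stdSimplex ℝ A, ⨅ θ : stdSimplex ℝ B, expPay u σ.1 θ.1

/-- The maximin strategies: mixed strategies of the maximizer guaranteeing at least the
value of the game against every mixed strategy of the minimizer. -/
def maximin {A B : Type*} [Fintype A] [Fintype B] (u : A → B → ℝ) : Set (A → ℝ) :=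
  {σ | σ ∈ stdSimplex ℝ A ∧ ∀ θ ∈ stdSimplex ℝ B, gameValue u ≤ expPay u σ θ}

/-- `σ` is a good reply to `θ`: it gets at least the value of the game against `θ`. -/
def GoodReply {A B : Type*} [Fintype A] [Fintype B] (u : A → B → ℝ)
    (σ : A → ℝ) (θ : B → ℝ) : Prop :=
  gameValue u ≤ expPay u σ θ

/-- `S` is good against `T`: for every `θ ∈ T` some `σ ∈ S` is a good reply to `θ`. -/
def GoodAgainst {A B : Type*} [Fintype A] [Fintype B] (u : A → B → ℝ)
    (S : Set (A → ℝ)) (T : Set (B → ℝ)) : Prop :=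
  ∀ θ ∈ T, ∃ σ ∈ S, GoodReply u σ θ

/-- `S` is good: good against all mixed strategies of the minimizer. -/
def IsGood {A B : Type*} [Fintype A] [Fintype B] (u : A → B → ℝ)
    (S : Set (A → ℝ)) : Prop :=
  GoodAgainst u S (stdSimplex ℝ B)

/-- If `Γ` is a zero-sum game and `Σ ⊆ Δ(C_M)` is good, then the closed convex hull of `Σ`
contains a maximin strategy of `Γ`. -/
theorem good_set_clconv_inter_maximin_nonempty
    {A B : Type*} [Fintype A] [Fintype B]
    (hA : 2 ≤ Fintype.card A) (hB : 2 ≤ Fintype.card B)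
    (u : A → B → ℝ) (S : Set (A → ℝ)) (hS : S ⊆ stdSimplex ℝ A)
    (hgood : IsGood u S) :
    (closure (convexHull ℝ S) ∩ maximin u).Nonempty := by
  classical
  set V := gameValue u with hV
  have hBne : Nonempty B := Fintype.card_pos_iff.mp (by omega)
  obtain ⟨b0⟩ := hBne
  have expPay_eq : ∀ (σ : A → ℝ) (θ : B → ℝ),
      expPay u σ θ = ∑ b, θ b * (∑ a, σ a * u a b) := by
    intro σ θ
    rw [expPay, Finset.sum_comm]
    refine Finset.sum_congr rfl fun b _ => ?_
    rw [Finset.mul_sum]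
    exact Finset.sum_congr rfl fun a _ => by ring
  -- some element of the simplex on B
  have hθ0 : (fun b => if b = b0 then (1:ℝ) else 0) ∈ stdSimplex ℝ B := by
    constructor
    · intro b; dsimp only; split <;> norm_num
    · simp
  obtain ⟨σ0, hσ0S, _⟩ := hgood _ hθ0
  set D := closure (convexHull ℝ S) with hD
  have hSD : S ⊆ D := (subset_convexHull ℝ S).trans subset_closure
  have hDsub : D ⊆ stdSimplex ℝ A :=
    closure_minimal (convexHull_min hS (convex_stdSimplex ℝ A)) (isClosed_stdSimplex ℝ A)
  have hDcomp : IsCompact D :=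
    (isCompact_stdSimplex ℝ A).of_isClosed_subset isClosed_closure hDsub
  have hDconv : Convex ℝ D := (convex_convexHull ℝ S).closure
  let G : (A → ℝ) →ₗ[ℝ] (B → ℝ) :=
    { toFun := fun σ b => ∑ a, σ a * u a b
      map_add' := by
        intro x y; funext b; simp [add_mul, Finset.sum_add_distrib]
      map_smul' := by
        intro c x; funext b; simp [Finset.mul_sum, mul_assoc] }
  have key : ∃ σ ∈ D, ∀ b, V ≤ G σ b := by
    by_contra h
    push_neg at h
    set K := G '' D with hK
    set T : Set (B → ℝ) := {y | ∀ b, V ≤ y b} with hT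
    have hKcomp : IsCompact K := hDcomp.image G.continuous_of_finiteDimensional
    have hKconv : Convex ℝ K := hDconv.linear_image G
    have hTclosed : IsClosed T := by
      have : T = ⋂ b, {y : B → ℝ | V ≤ y b} := by
        ext y; simp [hT, Set.mem_iInter]
      rw [this]
      exact isClosed_iInter fun b => isClosed_le continuous_const (continuous_apply b)
    have hTconv : Convex ℝ T := by
      intro x hx y hy a b' ha hb hab
      intro b
      have h1 := hx b
      have h2 := hy b
      simp only [Pi.add_apply, Pi.smul_apply, smul_eq_mul]
      have h3 : a * V + b' * V = V := by rw [← add_mul, hab, one_mul]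
      have h4 := mul_le_mul_of_nonneg_left h1 ha
      have h5 := mul_le_mul_of_nonneg_left h2 hb
      linarith
    have hdisj : Disjoint K T := by
      rw [Set.disjoint_left]
      rintro y ⟨σ, hσ, rfl⟩ hyT
      obtain ⟨b, hb⟩ := h σ hσ
      exact absurd (hyT b) (not_le.mpr hb)
    obtain ⟨f, c, d, hfc, hcd, hfd⟩ :=
      geometric_hahn_banach_compact_closed hKconv hKcomp hTconv hTclosed hdisj
    set cf : B → ℝ := fun b => f (Pi.single b (1:ℝ)) with hcf
    have hf : ∀ y : B → ℝ, f y = ∑ b, y b * cf b := by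
      intro y
      have hy : y = ∑ b, y b • (Pi.single b (1:ℝ) : B → ℝ) := by
        funext j
        rw [Finset.sum_apply]
        simp [Pi.single_apply]
      conv_lhs => rw [hy]
      rw [map_sum]
      exact Finset.sum_congr rfl fun b _ => by simp [hcf, smul_eq_mul]
    -- the constant V function is in T
    have hconstV : (fun _ : B => V) ∈ T := fun b => le_refl V
    have hfw := hfd _ hconstV
    have hcf_nonneg : ∀ b, 0 ≤ cf b := by
      intro b
      by_contra hneg
      push_neg at hneg
      obtain ⟨n, hn0, hnge⟩ : ∃ n : ℝ, 0 ≤ n ∧ (f (fun _ => V) - d) / (-cf b) < n := by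
        refine ⟨max ((f (fun _ => V) - d) / (-cf b)) 0 + 1, ?_, ?_⟩
        · have := le_max_right ((f (fun _ => V) - d) / (-cf b)) (0:ℝ); linarith
        · have := le_max_left ((f (fun _ => V) - d) / (-cf b)) (0:ℝ); linarith
      have hmem : (fun b' => V + n * ((Pi.single b (1:ℝ) : B → ℝ) b')) ∈ T := by
        intro b'
        show V ≤ V + n * ((Pi.single b (1:ℝ) : B → ℝ) b')
        have h0 : (0:ℝ) ≤ (Pi.single b (1:ℝ) : B → ℝ) b' := by
          simp only [Pi.single_apply]; split <;> norm_num
        nlinarith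
      have hval := hfd _ hmem
      have heq : f (fun b' => V + n * ((Pi.single b (1:ℝ) : B → ℝ) b'))
          = f (fun _ => V) + n * cf b := by
        rw [hf, hf]
        rw [show (∑ b', ((V:ℝ) + n * (Pi.single b (1:ℝ) : B → ℝ) b') * cf b')
            = ∑ b', (V * cf b' + (n * (Pi.single b (1:ℝ) : B → ℝ) b') * cf b') from
          Finset.sum_congr rfl fun b' _ => by ring]
        rw [Finset.sum_add_distrib]
        congr 1
        rw [Finset.sum_eq_single b]
        · simp
        · intro b' _ hb'; simp [Pi.single_apply, hb']
        · intro hb'; exact absurd (Finset.mem_univ b) hb'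
      rw [heq] at hval
      have hpos : 0 < -cf b := by linarith
      have := (div_lt_iff₀ hpos).mp hnge
      nlinarith
    -- sum of cf is positive
    have hx0 : G σ0 ∈ K := ⟨σ0, hSD hσ0S, rfl⟩
    have hfx0 := hfc _ hx0
    obtain ⟨m, hmpos, hm1⟩ : ∃ m : ℝ, 0 < m ∧ ∀ b, V - G σ0 b ≤ m := by
      refine ⟨1 + ∑ b, max (V - G σ0 b) 0, ?_, ?_⟩
      · have : (0:ℝ) ≤ ∑ b, max (V - G σ0 b) 0 :=
          Finset.sum_nonneg fun b _ => le_max_right _ _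
        linarith
      · intro b
        have h1 : max (V - G σ0 b) 0 ≤ ∑ b', max (V - G σ0 b') 0 :=
          Finset.single_le_sum (f := fun b' => max (V - G σ0 b') 0)
            (fun b' _ => le_max_right _ _) (Finset.mem_univ b)
        have h2 := le_max_left (V - G σ0 b) 0
        linarith
    have hymem : (fun b => G σ0 b + m) ∈ T := fun b => by
      show V ≤ G σ0 b + m
      have := hm1 b; linarith
    have hyval := hfd _ hymem
    have heqy : f (fun b => G σ0 b + m) = f (G σ0) + m * ∑ b, cf b := by
      rw [hf, hf, Finset.mul_sum, ← Finset.sum_add_distrib]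
      exact Finset.sum_congr rfl fun b _ => by ring
    have hsumpos : 0 < ∑ b, cf b := by
      rw [heqy] at hyval
      nlinarith
    -- build the mixed strategy θ'
    set Csum := ∑ b, cf b with hCsum
    set θ' : B → ℝ := fun b => cf b / Csum with hθ'
    have hθ'mem : θ' ∈ stdSimplex ℝ B := by
      constructor
      · intro b; exact div_nonneg (hcf_nonneg b) (le_of_lt hsumpos)
      · rw [hθ']
        simp only
        rw [← Finset.sum_div, ← hCsum, div_self (ne_of_gt hsumpos)]
    obtain ⟨σ, hσS, hσgood⟩ := hgood _ hθ'mem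
    have hGσ : G σ ∈ K := ⟨σ, hSD hσS, rfl⟩
    have hfσ := hfc _ hGσ
    -- expPay u σ θ' = f (G σ) / Csum < V
    have hpay : expPay u σ θ' = f (G σ) / Csum := by
      rw [expPay_eq, hf, Finset.sum_div]
      exact Finset.sum_congr rfl fun b _ => by
        show θ' b * G σ b = G σ b * cf b / Csum
        rw [hθ']; ring
    have hfconstV : f (fun _ : B => V) = V * Csum := by
      rw [hf, hCsum, Finset.mul_sum]
    have hlt : expPay u σ θ' < V := by
      rw [hpay]
      rw [div_lt_iff₀ hsumpos]
      have : f (G σ) < V * Csum := by rw [← hfconstV]; linarith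
      linarith
    exact absurd hσgood (not_le.mpr hlt)
  obtain ⟨σ, hσD, hσ⟩ := key
  refine ⟨σ, hσD, hDsub hσD, fun θ hθ => ?_⟩
  rw [expPay_eq]
  calc V = ∑ b, θ b * V := by
        rw [← Finset.sum_mul, hθ.2, one_mul]
    _ ≤ ∑ b, θ b * (∑ a, σ a * u a b) :=
        Finset.sum_le_sum fun b _ => mul_le_mul_of_nonneg_left (hσ b) (hθ.1 b)
end

section
/- Let Γ be any finite game and Γ^0 its auxiliary zero-sum game. Then: (i) u_M^0(s,(r_i,r_i)) = 0 for every player i, every r_i ∈ C_i, and every s ∈ C, and consequently v(Γ^0) ≤ 0; (ii) a distribution σ ∈ Δ(C) satisfies u_M^0(σ,(r_i,t_i)) ≥ 0 for all (r_i,t_i) ∈ C_m^0 if and only if σ is a correlated equilibrium of Γ; (iii) if v(Γ^0) = 0 then maximin(Γ^0) = CE(Γ). -/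
open Finset
open scoped Classical BigOperators

/-- The maximizer's utility in the auxiliary zero-sum game `Γ⁰` associated to the finite
game with strategy sets `C i` and utilities `u`.  The maximizer plays a strategy profile
`s`, the minimizer a pair `(rᵢ, tᵢ)` of strategies of some player `i`. -/
noncomputable def uM0 {I : Type*} [Fintype I] {C : I → Type*} [∀ i, Fintype (C i)]
    (u : ∀ i : I, (∀ j, C j) → ℝ) (s : ∀ j, C j) : (Σ i : I, C i × C i) → ℝ :=
  fun p => if p.2.1 = s p.1 then u p.1 s - u p.1 (Function.update s p.1 p.2.2) else 0

/-- Correlated equilibria of the finite game with strategy sets `C i` and utilities `u`: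
distributions `π` on profiles such that no player can gain by deviating from a
recommended strategy `sᵢ` to any `tᵢ`. -/
def CorrEq {I : Type*} [Fintype I] {C : I → Type*} [∀ i, Fintype (C i)]
    (u : ∀ i : I, (∀ j, C j) → ℝ) : Set ((∀ j, C j) → ℝ) :=
  {π | π ∈ stdSimplex ℝ (∀ j, C j) ∧
    ∀ (i : I) (si ti : C i),
      ∑ s : ∀ j, C j,
        (if s i = si then (u i (Function.update s i ti) - u i s) * π s else 0) ≤ 0}

/-- The product (independent) distributions on strategy profiles. -/
def prodDists {I : Type*} [Fintype I] (C : I → Type*) [∀ i, Fintype (C i)] :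
    Set ((∀ j, C j) → ℝ) :=
  {π | ∃ ρ : ∀ i, C i → ℝ, (∀ i, ρ i ∈ stdSimplex ℝ (C i)) ∧
        π = fun s => ∏ i, ρ i (s i)}

section AuxLemmas

variable {A B : Type*} [Fintype A] [Fintype B]

/-- Dirac (pure) strategy at a point. -/
noncomputable def auxDelta (b0 : B) : B → ℝ := fun b => if b = b0 then 1 else 0

lemma auxDelta_mem (b0 : B) : auxDelta b0 ∈ stdSimplex ℝ B := by
  constructor
  · intro b; unfold auxDelta; split <;> norm_num
  · simp [auxDelta]

lemma expPay_auxDelta (u : A → B → ℝ) (σ : A → ℝ) (b0 : B) :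
    expPay u σ (auxDelta b0) = ∑ a, σ a * u a b0 := by
  unfold expPay auxDelta
  refine Finset.sum_congr rfl fun a _ => ?_
  have h : ∀ b, σ a * (if b = b0 then (1:ℝ) else 0) * u a b
      = if b = b0 then σ a * u a b else 0 := by
    intro b; split <;> simp
  simp [h]

lemma expPay_swap (u : A → B → ℝ) (σ : A → ℝ) (θ : B → ℝ) :
    expPay u σ θ = ∑ b, θ b * ∑ a, σ a * u a b := by
  unfold expPay
  rw [Finset.sum_comm]
  refine Finset.sum_congr rfl fun b _ => ?_
  rw [Finset.mul_sum]
  exact Finset.sum_congr rfl fun a _ => by ring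

lemma expPay_bddBelow (u : A → B → ℝ) {σ : A → ℝ} (hσ : σ ∈ stdSimplex ℝ A)
    {θ : B → ℝ} (hθ : θ ∈ stdSimplex ℝ B) :
    -(∑ a, ∑ b, |u a b|) ≤ expPay u σ θ := by
  unfold expPay
  rw [← Finset.sum_neg_distrib]
  refine Finset.sum_le_sum fun a _ => ?_
  rw [← Finset.sum_neg_distrib]
  refine Finset.sum_le_sum fun b _ => ?_
  have hσa : 0 ≤ σ a := hσ.1 a
  have hθb : 0 ≤ θ b := hθ.1 b
  have hσa1 : σ a ≤ 1 := by
    have := Finset.single_le_sum (fun x _ => hσ.1 x) (Finset.mem_univ a)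
    simpa [hσ.2] using this
  have hθb1 : θ b ≤ 1 := by
    have := Finset.single_le_sum (fun x _ => hθ.1 x) (Finset.mem_univ b)
    simpa [hθ.2] using this
  have hx : 0 ≤ σ a * θ b := mul_nonneg hσa hθb
  have key1 : 0 ≤ (σ a * θ b) * (u a b + |u a b|) :=
    mul_nonneg hx (by have := neg_le_abs (u a b); linarith)
  have key2 : 0 ≤ (1 - σ a * θ b) * |u a b| :=
    mul_nonneg (by nlinarith) (abs_nonneg _)
  nlinarith [key1, key2]

end AuxLemmas

/-- Properties of the auxiliary zero-sum game `Γ⁰`: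
(i) `u_M⁰(s,(rᵢ,rᵢ)) = 0` always, and hence `v(Γ⁰) ≤ 0`;
(ii) `σ ∈ Δ(C)` satisfies `u_M⁰(σ,(rᵢ,tᵢ)) ≥ 0` for all minimizer pure strategies iff
`σ` is a correlated equilibrium;
(iii) if `v(Γ⁰) = 0` then `maximin(Γ⁰) = CE(Γ)`. -/
theorem gamma0_props {I : Type*} [Fintype I] {C : I → Type*} [∀ i, Fintype (C i)]
    (hI : 2 ≤ Fintype.card I) (hC : ∀ i, 2 ≤ Fintype.card (C i))
    (u : ∀ i : I, (∀ j, C j) → ℝ) :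
    (∀ (i : I) (r : C i) (s : ∀ j, C j), uM0 u s ⟨i, (r, r)⟩ = 0) ∧
    gameValue (uM0 u) ≤ 0 ∧
    (∀ σ ∈ stdSimplex ℝ (∀ j, C j),
      ((∀ p : Σ i : I, C i × C i, 0 ≤ ∑ s : ∀ j, C j, σ s * uM0 u s p) ↔ σ ∈ CorrEq u)) ∧
    (gameValue (uM0 u) = 0 → maximin (uM0 u) = CorrEq u) := by
  haveI : Nonempty I := Fintype.card_pos_iff.mp (by omega)
  haveI : ∀ i, Nonempty (C i) := fun i => Fintype.card_pos_iff.mp (by have := hC i; omega)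
  haveI : Nonempty (∀ j, C j) := ⟨fun j => Classical.arbitrary _⟩
  -- (i) diagonal minimizer strategies give payoff 0
  have hdiag : ∀ (i : I) (r : C i) (s : ∀ j, C j), uM0 u s ⟨i, (r, r)⟩ = 0 := by
    intro i r s
    unfold uM0
    rcases eq_or_ne r (s i) with h | h
    · subst h; simp [Function.update_eq_self]
    · simp [h]
  -- key equality for (ii)
  have hsum : ∀ (σ : (∀ j, C j) → ℝ) (i : I) (si ti : C i),
      (∑ s : ∀ j, C j, σ s * uM0 u s ⟨i, (si, ti)⟩)
        = -(∑ s : ∀ j, C j,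
            (if s i = si then (u i (Function.update s i ti) - u i s) * σ s else 0)) := by
    intro σ i si ti
    rw [← Finset.sum_neg_distrib]
    refine Finset.sum_congr rfl fun s _ => ?_
    unfold uM0
    rcases eq_or_ne (s i) si with h | h
    · simp only [h, if_pos rfl, if_true, eq_self_iff_true, ite_true]
      ring
    · simp [h, Ne.symm h]
  -- (ii) the equivalence
  have hii : ∀ σ ∈ stdSimplex ℝ (∀ j, C j),
      ((∀ p : Σ i : I, C i × C i, 0 ≤ ∑ s : ∀ j, C j, σ s * uM0 u s p) ↔ σ ∈ CorrEq u) := by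
    intro σ hσ
    constructor
    · intro h
      refine ⟨hσ, fun i si ti => ?_⟩
      have := h ⟨i, (si, ti)⟩
      rw [hsum σ i si ti] at this
      linarith
    · rintro ⟨-, h⟩ ⟨i, si, ti⟩
      rw [hsum σ i si ti]
      have := h i si ti
      linarith
  -- (i) value ≤ 0
  have hval : gameValue (uM0 u) ≤ 0 := by
    obtain ⟨i0⟩ := (inferInstance : Nonempty I)
    obtain ⟨r0⟩ := (inferInstance : Nonempty (C i0))
    set b0 : Σ i : I, C i × C i := ⟨i0, (r0, r0)⟩
    haveI : Nonempty (stdSimplex ℝ (∀ j, C j)) :=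
      ⟨⟨auxDelta (Classical.arbitrary _), auxDelta_mem _⟩⟩
    refine ciSup_le fun σ => ?_
    have hbdd : BddBelow (Set.range fun θ : stdSimplex ℝ (Σ i : I, C i × C i) =>
        expPay (uM0 u) σ.1 θ.1) := by
      refine ⟨-(∑ a, ∑ b, |uM0 u a b|), ?_⟩
      rintro x ⟨θ, rfl⟩
      exact expPay_bddBelow _ σ.2 θ.2
    refine ciInf_le_of_le hbdd ⟨auxDelta b0, auxDelta_mem b0⟩ ?_
    rw [expPay_auxDelta]
    have : ∀ a : ∀ j, C j, σ.1 a * uM0 u a b0 = 0 := by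
      intro a; rw [hdiag i0 r0 a]; ring
    simp [this]
  refine ⟨hdiag, hval, hii, ?_⟩
  -- (iii)
  intro hv
  ext σ
  constructor
  · rintro ⟨hσ, hmax⟩
    refine (hii σ hσ).mp fun p => ?_
    have := hmax (auxDelta p) (auxDelta_mem p)
    rw [hv, expPay_auxDelta] at this
    exact this
  · intro hce
    have hσ : σ ∈ stdSimplex ℝ (∀ j, C j) := hce.1
    have hp : ∀ p : Σ i : I, C i × C i, 0 ≤ ∑ s : ∀ j, C j, σ s * uM0 u s p :=
      (hii σ hσ).mpr hce
    refine ⟨hσ, fun θ hθ => ?_⟩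
    rw [hv, expPay_swap]
    exact Finset.sum_nonneg fun b _ => mul_nonneg (hθ.1 b) (hp b)
end

section
/- Fix a finite game Γ and consider Γ^0. For any y = (y_1,…,y_n) ∈ Δ(C_m^0) (so each y_i ∈ ℝ^{C_i×C_i} is nonnegative and the entries of all y_i sum to 1), every product distribution π = π_1⋯π_n ∈ Δ(C) with π_i ∈ maximin(γ(y_i)) for each i satisfies u_M^0(π, y) = 0. In particular v(Γ^0) = 0, π is a good reply to y, and the set Δ^Π(Γ) of product distributions is good in Γ^0. -/
open Finset
open scoped Classical BigOperators

/-- The auxiliary zero-sum game `γ(yᵢ)` on a strategy set `A` determined by a nonnegative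
matrix `y : A → A → ℝ`. -/
noncomputable def gammaU {A : Type*} [Fintype A] (y : A → A → ℝ) : A → A → ℝ :=
  fun s t => if s = t then ∑ r ∈ Finset.univ.erase t, y s r else -(y s t)

section Aux
variable {A B : Type*} [Fintype A] [Fintype B]

/-- payoff of `σ` against the pure strategy `b`. -/
noncomputable def colPay (u : A → B → ℝ) (σ : A → ℝ) (b : B) : ℝ := ∑ a, σ a * u a b

/-- payoff of the pure strategy `a` against `θ`. -/
noncomputable def rowPay (u : A → B → ℝ) (θ : B → ℝ) (a : A) : ℝ := ∑ b, θ b * u a b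

noncomputable def purePt {X : Type*} [Fintype X] (x : X) : X → ℝ :=
  fun x' => if x' = x then 1 else 0

lemma purePt_mem {X : Type*} [Fintype X] (x : X) : purePt x ∈ stdSimplex ℝ X := by
  constructor
  · intro x'; unfold purePt; split <;> norm_num
  · simp [purePt]

lemma expPay_eq_col (u : A → B → ℝ) (σ : A → ℝ) (θ : B → ℝ) :
    expPay u σ θ = ∑ b, θ b * colPay u σ b := by
  rw [expPay, Finset.sum_comm]
  simp only [colPay, Finset.mul_sum]
  congr 1; ext b; congr 1; ext a; ring

lemma expPay_eq_row (u : A → B → ℝ) (σ : A → ℝ) (θ : B → ℝ) :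
    expPay u σ θ = ∑ a, σ a * rowPay u θ a := by
  simp only [expPay, rowPay, Finset.mul_sum]
  congr 1; ext a; congr 1; ext b; ring

lemma expPay_pure_right (u : A → B → ℝ) (σ : A → ℝ) (b : B) :
    expPay u σ (purePt b) = colPay u σ b := by
  rw [expPay_eq_col]
  simp [purePt, ite_mul]

lemma mem_simplex_le_one {X : Type*} [Fintype X] {σ : X → ℝ} (hσ : σ ∈ stdSimplex ℝ X)
    (x : X) : σ x ≤ 1 := by
  have := Finset.single_le_sum (f := σ) (fun i _ => hσ.1 i) (Finset.mem_univ x)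
  rwa [hσ.2] at this

noncomputable def bnd (u : A → B → ℝ) : ℝ := ∑ a, ∑ b, |u a b|

lemma expPay_le_bnd {u : A → B → ℝ} {σ : A → ℝ} {θ : B → ℝ}
    (hσ : σ ∈ stdSimplex ℝ A) (hθ : θ ∈ stdSimplex ℝ B) :
    expPay u σ θ ≤ bnd u := by
  apply Finset.sum_le_sum; intro a _; apply Finset.sum_le_sum; intro b _
  have h1 : σ a * θ b ≤ 1 :=
    mul_le_one₀ (mem_simplex_le_one hσ a) (hθ.1 b) (mem_simplex_le_one hθ b)
  have h0 : 0 ≤ σ a * θ b := mul_nonneg (hσ.1 a) (hθ.1 b)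
  calc σ a * θ b * u a b ≤ σ a * θ b * |u a b| :=
        mul_le_mul_of_nonneg_left (le_abs_self _) h0
    _ ≤ 1 * |u a b| := mul_le_mul_of_nonneg_right h1 (abs_nonneg _)
    _ = |u a b| := one_mul _

lemma neg_bnd_le_expPay {u : A → B → ℝ} {σ : A → ℝ} {θ : B → ℝ}
    (hσ : σ ∈ stdSimplex ℝ A) (hθ : θ ∈ stdSimplex ℝ B) :
    -bnd u ≤ expPay u σ θ := by
  rw [bnd, ← Finset.sum_neg_distrib]
  apply Finset.sum_le_sum; intro a _
  rw [← Finset.sum_neg_distrib]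
  apply Finset.sum_le_sum; intro b _
  have h1 : σ a * θ b ≤ 1 :=
    mul_le_one₀ (mem_simplex_le_one hσ a) (hθ.1 b) (mem_simplex_le_one hθ b)
  have h0 : 0 ≤ σ a * θ b := mul_nonneg (hσ.1 a) (hθ.1 b)
  calc -|u a b| = 1 * -|u a b| := (one_mul _).symm
    _ ≤ σ a * θ b * -|u a b| := by
        apply mul_le_mul_of_nonpos_right h1 (neg_nonpos.mpr (abs_nonneg _)) |>.trans_eq rfl
    _ ≤ σ a * θ b * u a b :=
        mul_le_mul_of_nonneg_left (neg_abs_le _) h0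

end Aux
set_option linter.unusedSectionVars false
section Aux2
variable {A B : Type*} [Fintype A] [Fintype B] [Nonempty A] [Nonempty B] {u : A → B → ℝ}

instance : Nonempty (stdSimplex ℝ A) := ⟨⟨purePt (Classical.arbitrary A), purePt_mem _⟩⟩

lemma inner_bddBelow (σ : stdSimplex ℝ A) :
    BddBelow (Set.range fun θ : stdSimplex ℝ B => expPay u σ.1 θ.1) := by
  refine ⟨-bnd u, ?_⟩
  rintro x ⟨θ, rfl⟩
  exact neg_bnd_le_expPay σ.2 θ.2

lemma inf_le_colPay (σ : stdSimplex ℝ A) (b : B) :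
    (⨅ θ : stdSimplex ℝ B, expPay u σ.1 θ.1) ≤ colPay u σ.1 b := by
  have := ciInf_le (inner_bddBelow (u := u) σ) (⟨purePt b, purePt_mem b⟩ : stdSimplex ℝ B)
  rwa [expPay_pure_right] at this

lemma le_inf' {σ : stdSimplex ℝ A} {c : ℝ} (h : ∀ b, c ≤ colPay u σ.1 b) :
    c ≤ ⨅ θ : stdSimplex ℝ B, expPay u σ.1 θ.1 := by
  apply le_ciInf; intro θ
  rw [expPay_eq_col]
  calc c = ∑ b, θ.1 b * c := by rw [← Finset.sum_mul, θ.2.2, one_mul]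
    _ ≤ ∑ b, θ.1 b * colPay u σ.1 b :=
      Finset.sum_le_sum fun b _ => mul_le_mul_of_nonneg_left (h b) (θ.2.1 b)

lemma gameValue_le {c : ℝ} (h : ∀ σ ∈ stdSimplex ℝ A, ∃ b, colPay u σ b ≤ c) :
    gameValue u ≤ c := by
  apply ciSup_le; intro σ
  obtain ⟨b, hb⟩ := h σ.1 σ.2
  exact (inf_le_colPay σ b).trans hb

lemma le_gameValue {c : ℝ} {σ : A → ℝ} (hσ : σ ∈ stdSimplex ℝ A)
    (h : ∀ b, c ≤ colPay u σ b) : c ≤ gameValue u := by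
  have hab : BddAbove (Set.range fun σ : stdSimplex ℝ A =>
      ⨅ θ : stdSimplex ℝ B, expPay u σ.1 θ.1) := by
    refine ⟨bnd u, ?_⟩
    rintro x ⟨τ, rfl⟩
    have θ₀ : stdSimplex ℝ B := ⟨purePt (Classical.arbitrary B), purePt_mem _⟩
    exact (ciInf_le (inner_bddBelow (u := u) τ) θ₀).trans (expPay_le_bnd τ.2 θ₀.2)
  exact le_ciSup_of_le hab (⟨σ, hσ⟩ : stdSimplex ℝ A) (le_inf' (σ := ⟨σ, hσ⟩) h)

lemma maximin_colPay {σ : A → ℝ} (hσ : σ ∈ maximin u) (b : B) :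
    gameValue u ≤ colPay u σ b := by
  have := hσ.2 (purePt b) (purePt_mem b)
  rwa [expPay_pure_right] at this

end Aux2
section Alt
variable {A B : Type*} [Fintype A] [Fintype B] [Nonempty A] [Nonempty B]

/-- The linear map sending a minimizer mixed strategy to its vector of row payoffs. -/
noncomputable def rowMap (u : A → B → ℝ) : (B → ℝ) →ₗ[ℝ] (A → ℝ) where
  toFun θ := fun a => ∑ b, θ b * u a b
  map_add' θ₁ θ₂ := by ext a; simp [add_mul, Finset.sum_add_distrib]
  map_smul' c θ := by ext a; simp [Finset.mul_sum]; congr 1; ext b; ring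

noncomputable def sing (a : A) : A → ℝ := Pi.single a 1

lemma clm_eq_sum (f : (A → ℝ) →L[ℝ] ℝ) (x : A → ℝ) :
    f x = ∑ a, x a * f (sing a) := by
  conv_lhs => rw [← Finset.univ_sum_single x]
  rw [map_sum]
  congr 1; ext a
  have h1 : (Pi.single a (x a) : A → ℝ) = (x a) • sing a := by
    unfold sing
    rw [← Pi.single_smul, smul_eq_mul, mul_one]
  rw [h1, map_smul, smul_eq_mul]

/-- Theorem of the alternative for matrix games, via hyperplane separation. -/
theorem matrix_alternative (u : A → B → ℝ) :
    (∃ σ ∈ stdSimplex ℝ A, ∀ b, 0 ≤ colPay u σ b) ∨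
    (∃ θ ∈ stdSimplex ℝ B, ∀ a, rowPay u θ a < 0) := by
  by_cases hneg : ∃ θ ∈ stdSimplex ℝ B, ∀ a, rowPay u θ a < 0
  · exact Or.inr hneg
  left
  set O : Set (A → ℝ) := Set.univ.pi (fun _ : A => Set.Iio (0:ℝ)) with hO
  set K : Set (A → ℝ) := (rowMap u) '' (stdSimplex ℝ B) with hK
  have hOconv : Convex ℝ O := convex_pi (fun _ _ => convex_Iio 0)
  have hOopen : IsOpen O := isOpen_set_pi Set.finite_univ (fun _ _ => isOpen_Iio)
  have hKconv : Convex ℝ K := (convex_stdSimplex ℝ B).linear_image (rowMap u)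
  have hdisj : Disjoint O K := by
    rw [Set.disjoint_left]
    rintro x hxO ⟨θ, hθ, rfl⟩
    exact hneg ⟨θ, hθ, fun a => hxO a (Set.mem_univ a)⟩
  obtain ⟨f, c, hfO, hfK⟩ := geometric_hahn_banach_open hOconv hOopen hKconv hdisj
  -- the coefficient vector of f
  set g : A → ℝ := fun a => f (sing a) with hg
  have hfx : ∀ x : A → ℝ, f x = ∑ a, x a * g a := fun x => clm_eq_sum f x
  -- membership in O of useful points
  have hmemO : ∀ (t : ℝ), 0 ≤ t → ∀ a : A,
      ((fun _ => (-1:ℝ)) + (-t) • sing a) ∈ O := by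
    intro t ht a a' _
    simp only [Pi.add_apply, Pi.smul_apply, smul_eq_mul, sing]
    by_cases h : a' = a
    · subst h
      rw [Pi.single_eq_same]
      show (-1 : ℝ) + -t * 1 < 0
      linarith
    · rw [Pi.single_eq_of_ne h]
      show (-1 : ℝ) + -t * 0 < 0
      linarith
  -- g is nonnegative
  have hgnn : ∀ a, 0 ≤ g a := by
    intro a
    by_contra hga
    push_neg at hga
    set t : ℝ := max 0 ((c - f (fun _ => (-1:ℝ))) / (-g a)) with ht
    have ht0 : 0 ≤ t := le_max_left _ _
    have hx := hfO _ (hmemO t ht0 a)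
    rw [map_add, map_smul, smul_eq_mul] at hx
    have : (c - f (fun _ => (-1:ℝ))) / (-g a) ≤ t := le_max_right _ _
    have h2 : c - f (fun _ => (-1:ℝ)) ≤ t * (-g a) := by
      rw [div_le_iff₀ (by linarith)] at this; linarith
    have hsa : f (sing a) = g a := rfl
    rw [hsa] at hx
    nlinarith
  -- c is nonnegative
  have hc0 : 0 ≤ c := by
    by_contra hc
    push_neg at hc
    have hfone := hfx (fun _ => (-1:ℝ))
    -- points ε·(-1) are in O for ε > 0
    have hball : ∀ ε : ℝ, 0 < ε → f (fun _ => -ε) < c := by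
      intro ε hε
      apply hfO
      intro a' _
      simpa using neg_lt_zero.mpr hε
    -- f (fun _ => -ε) = ε * f(fun _ => -1)... just use hfx
    have hlin : ∀ ε : ℝ, f (fun _ => -ε) = ε * f (fun _ => (-1:ℝ)) := by
      intro ε
      have : (fun _ : A => -ε) = ε • (fun _ : A => (-1:ℝ)) := by
        ext a'
        show -ε = ε * (-1)
        ring
      rw [this, map_smul, smul_eq_mul]
    set w := f (fun _ => (-1:ℝ)) with hw
    set ε := -c / (2 * (|w| + 1)) with hε
    have hεpos : 0 < ε := by
      apply div_pos (by linarith)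
      positivity
    have h1 : f (fun _ => -ε) < c := hball ε hεpos
    rw [hlin] at h1
    have h2 : ε * w ≥ -(ε * (|w| + 1)) := by
      have : ε * w ≥ -(ε * |w|) := by nlinarith [neg_abs_le w, hεpos.le]
      nlinarith [hεpos.le]
    have h3 : ε * (|w| + 1) = -c / 2 := by
      rw [hε]; field_simp
    nlinarith
  -- the sum of g is positive (g ≠ 0)
  have hKne : ∀ b : B, (fun a => u a b) ∈ K := by
    intro b
    refine ⟨purePt b, purePt_mem b, ?_⟩
    ext a
    simp only [rowMap, LinearMap.coe_mk, AddHom.coe_mk]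
    simp [purePt, ite_mul]
  have hgcol : ∀ b, 0 ≤ ∑ a, g a * u a b := by
    intro b
    have := hfK _ (hKne b)
    rw [hfx] at this
    have h2 : (0:ℝ) ≤ ∑ a, u a b * g a := le_trans hc0 this
    calc (0:ℝ) ≤ ∑ a, u a b * g a := h2
      _ = ∑ a, g a * u a b := by congr 1; ext a; ring
  have hS : 0 < ∑ a, g a := by
    rcases lt_or_eq_of_le (Finset.sum_nonneg (fun a _ => hgnn a)) with h | h
    · exact h
    -- if ∑ g = 0 then g ≡ 0 and f = 0, contradiction
    exfalso
    have hz : ∀ a, g a = 0 := by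
      intro a
      have := (Finset.sum_eq_zero_iff_of_nonneg (fun a _ => hgnn a)).mp h.symm
      exact this a (Finset.mem_univ a)
    have hf0 : ∀ x : A → ℝ, f x = 0 := by
      intro x; rw [hfx]; simp [hz]
    have h1 := hfO _ (hmemO 0 le_rfl (Classical.arbitrary A))
    rw [hf0] at h1
    have h2 := hfK _ (hKne (Classical.arbitrary B))
    rw [hf0] at h2
    linarith
  refine ⟨fun a => g a / (∑ a', g a'), ⟨fun a => div_nonneg (hgnn a) hS.le, ?_⟩, ?_⟩
  · rw [← Finset.sum_div, div_self hS.ne']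
  · intro b
    rw [colPay]
    have : ∑ a, g a / (∑ a', g a') * u a b = (∑ a, g a * u a b) / (∑ a', g a') := by
      rw [Finset.sum_div]; congr 1; ext a; ring
    rw [this]
    exact div_nonneg (hgcol b) hS.le

end Alt
section G
variable {A B : Type*} [Fintype A] [Fintype B] [Nonempty A] [Nonempty B]
lemma gammaU_diag (y : A → A → ℝ) (a : A) :
    gammaU y a a = ∑ r ∈ Finset.univ.erase a, y a r := if_pos rfl

lemma gammaU_off {a b : A} (y : A → A → ℝ) (h : a ≠ b) : gammaU y a b = -(y a b) := if_neg h

lemma gamma_row_sum (y : A → A → ℝ) (a : A) : ∑ b, gammaU y a b = 0 := by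
  rw [← Finset.add_sum_erase _ _ (Finset.mem_univ a)]
  have h1 : gammaU y a a = ∑ r ∈ Finset.univ.erase a, y a r := gammaU_diag y a
  have h2 : ∑ b ∈ Finset.univ.erase a, gammaU y a b
      = ∑ b ∈ Finset.univ.erase a, -(y a b) := by
    apply Finset.sum_congr rfl
    intro b hb
    have hne : a ≠ b := fun h => (Finset.mem_erase.mp hb).1 h.symm
    rw [gammaU_off y hne]
  rw [h1, h2, Finset.sum_neg_distrib]
  ring

lemma sum_colPay_gamma (y : A → A → ℝ) (σ : A → ℝ) :
    ∑ b, colPay (gammaU y) σ b = 0 := by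
  calc ∑ b, colPay (gammaU y) σ b = ∑ b, ∑ a, σ a * gammaU y a b := rfl
    _ = ∑ a, ∑ b, σ a * gammaU y a b := Finset.sum_comm
    _ = ∑ a, σ a * ∑ b, gammaU y a b := by
        apply Finset.sum_congr rfl; intro a _; rw [Finset.mul_sum]
    _ = 0 := by simp [gamma_row_sum]

lemma gamma_no_neg_row (y : A → A → ℝ) (hy : ∀ a b, 0 ≤ y a b) {θ : A → ℝ}
    (hθ : θ ∈ stdSimplex ℝ A) : ∃ a, 0 ≤ rowPay (gammaU y) θ a := by
  obtain ⟨a, -, ha⟩ := Finset.exists_max_image Finset.univ θ ⟨Classical.arbitrary A, Finset.mem_univ _⟩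
  refine ⟨a, ?_⟩
  rw [rowPay, ← Finset.add_sum_erase _ _ (Finset.mem_univ a)]
  have h1 : θ a * gammaU y a a = ∑ r ∈ Finset.univ.erase a, θ a * y a r := by
    rw [gammaU_diag, Finset.mul_sum]
  have h2 : ∑ b ∈ Finset.univ.erase a, θ b * gammaU y a b
      = ∑ b ∈ Finset.univ.erase a, -(θ b * y a b) := by
    apply Finset.sum_congr rfl
    intro b hb
    have hne : a ≠ b := fun h => (Finset.mem_erase.mp hb).1 h.symm
    rw [gammaU_off y hne]; ring
  rw [h1, h2, Finset.sum_neg_distrib, ← sub_eq_add_neg, ← Finset.sum_sub_distrib]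
  apply Finset.sum_nonneg
  intro b hb
  have := ha b (Finset.mem_univ b)
  nlinarith [hy a b, hθ.1 b]

/-- Existence of a "balanced" (stationary) distribution for a nonnegative matrix `y`. -/
lemma exists_balanced (y : A → A → ℝ) (hy : ∀ a b, 0 ≤ y a b) :
    ∃ σ ∈ stdSimplex ℝ A, ∀ b, colPay (gammaU y) σ b = 0 := by
  rcases matrix_alternative (gammaU y) with ⟨σ, hσ, hcol⟩ | ⟨θ, hθ, hrow⟩
  · refine ⟨σ, hσ, ?_⟩
    have hz := sum_colPay_gamma y σ
    have := (Finset.sum_eq_zero_iff_of_nonneg (fun b _ => hcol b)).mp hz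
    exact fun b => this b (Finset.mem_univ b)
  · obtain ⟨a, ha⟩ := gamma_no_neg_row y hy hθ
    exact absurd ha (not_le.mpr (hrow a))

/-- Balance equations in the convenient form. -/
lemma balanced_eq {y : A → A → ℝ} {σ : A → ℝ}
    (h : ∀ b, colPay (gammaU y) σ b = 0) (b : A) :
    σ b * (∑ r, y b r) = ∑ a, σ a * y a b := by
  have hc := h b
  rw [colPay, ← Finset.add_sum_erase _ _ (Finset.mem_univ b)] at hc
  have h1 : σ b * gammaU y b b = ∑ r ∈ Finset.univ.erase b, σ b * y b r := by
    rw [gammaU_diag, Finset.mul_sum]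
  have h2 : ∑ a ∈ Finset.univ.erase b, σ a * gammaU y a b
      = ∑ a ∈ Finset.univ.erase b, -(σ a * y a b) := by
    apply Finset.sum_congr rfl
    intro a haa
    have hne : a ≠ b := (Finset.mem_erase.mp haa).1
    rw [gammaU_off y hne]; ring
  rw [h1, h2, Finset.sum_neg_distrib] at hc
  have e1 : σ b * (∑ r, y b r) = σ b * y b b + ∑ r ∈ Finset.univ.erase b, σ b * y b r := by
    rw [← Finset.mul_sum, ← Finset.add_sum_erase _ _ (Finset.mem_univ b), mul_add]
  have e2 : ∑ a, σ a * y a b = σ b * y b b + ∑ a ∈ Finset.univ.erase b, σ a * y a b := by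
    rw [← Finset.add_sum_erase _ _ (Finset.mem_univ b)]
  rw [e1, e2]
  linarith

end G
section KC
set_option linter.unusedSectionVars false
variable {I : Type*} [Fintype I] {C : I → Type*} [∀ i, Fintype (C i)]

/-- conditional expectation piece -/
noncomputable def Vfun (u : ∀ i : I, (∀ j, C j) → ℝ) (ρ : ∀ i, C i → ℝ) (i : I) (c : C i) : ℝ :=
  ∑ s : ∀ j, C j, if s i = c then (∏ j ∈ Finset.univ.erase i, ρ j (s j)) * u i s else 0

lemma prodsplit (ρ : ∀ i, C i → ℝ) (i : I) (s : ∀ j, C j) :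
    ∏ j, ρ j (s j) = ρ i (s i) * ∏ j ∈ Finset.univ.erase i, ρ j (s j) :=
  (Finset.mul_prod_erase Finset.univ _ (Finset.mem_univ i)).symm

lemma claimA (u : ∀ i : I, (∀ j, C j) → ℝ) (ρ : ∀ i, C i → ℝ) (i : I) (r : C i) :
    (∑ s : ∀ j, C j, if s i = r then (∏ j, ρ j (s j)) * u i s else 0)
      = ρ i r * Vfun u ρ i r := by
  rw [Vfun, Finset.mul_sum]
  apply Finset.sum_congr rfl
  intro s _
  by_cases h : s i = r
  · rw [if_pos h, if_pos h, prodsplit ρ i s, h]; ring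
  · rw [if_neg h, if_neg h, mul_zero]

lemma claimB (u : ∀ i : I, (∀ j, C j) → ℝ) (ρ : ∀ i, C i → ℝ) (i : I) (r t : C i) :
    (∑ s : ∀ j, C j, if s i = r then (∏ j, ρ j (s j)) * u i (Function.update s i t) else 0)
      = ρ i r * Vfun u ρ i t := by
  have step1 : (∑ s : ∀ j, C j, if s i = r then (∏ j, ρ j (s j)) * u i (Function.update s i t) else 0)
      = ρ i r * ∑ s : ∀ j, C j,
          if s i = r then (∏ j ∈ Finset.univ.erase i, ρ j (s j)) * u i (Function.update s i t) else 0 := by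
    rw [Finset.mul_sum]
    apply Finset.sum_congr rfl
    intro s _
    by_cases h : s i = r
    · rw [if_pos h, if_pos h, prodsplit ρ i s, h]; ring
    · rw [if_neg h, if_neg h, mul_zero]
  rw [step1, Vfun]
  congr 1
  -- reindex by s ↦ update s i t
  rw [← Finset.sum_filter, ← Finset.sum_filter]
  apply Finset.sum_nbij' (i := fun s => Function.update s i t)
    (j := fun s => Function.update s i r)
  · intro s hs
    simp only [Finset.mem_filter, Finset.mem_univ, true_and]
    exact Function.update_self i t s
  · intro s hs
    simp only [Finset.mem_filter, Finset.mem_univ, true_and]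
    exact Function.update_self i r s
  · intro s hs
    simp only [Finset.mem_filter, Finset.mem_univ, true_and] at hs
    rw [Function.update_idem, ← hs, Function.update_eq_self]
  · intro s hs
    simp only [Finset.mem_filter, Finset.mem_univ, true_and] at hs
    rw [Function.update_idem, ← hs, Function.update_eq_self]
  · intro s hs
    congr 1
    apply Finset.prod_congr rfl
    intro j hj
    rw [Function.update_of_ne (Finset.mem_erase.mp hj).1]

/-- The key computation: products of balanced distributions get exactly 0 in `Γ⁰`. -/
lemma key_computation (u : ∀ i : I, (∀ j, C j) → ℝ) (y : (Σ i : I, C i × C i) → ℝ)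
    (ρ : ∀ i, C i → ℝ)
    (hbal : ∀ i (b : C i), ρ i b * (∑ r, y ⟨i, (b, r)⟩) = ∑ a, ρ i a * y ⟨i, (a, b)⟩) :
    expPay (uM0 u) (fun s => ∏ j, ρ j (s j)) y = 0 := by
  rw [expPay]
  rw [Finset.sum_comm]
  rw [← Finset.univ_sigma_univ, Finset.sum_sigma]
  apply Finset.sum_eq_zero
  intro i _
  rw [Fintype.sum_prod_type]
  have inner : ∀ r t : C i,
      (∑ s : ∀ j, C j, (∏ j, ρ j (s j)) * y ⟨i, (r, t)⟩ * uM0 u s ⟨i, (r, t)⟩)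
        = y ⟨i, (r, t)⟩ * (ρ i r * Vfun u ρ i r - ρ i r * Vfun u ρ i t) := by
    intro r t
    rw [← claimA u ρ i r, ← claimB u ρ i r t, ← Finset.sum_sub_distrib, Finset.mul_sum]
    apply Finset.sum_congr rfl
    intro s _
    show (∏ j, ρ j (s j)) * y ⟨i, (r, t)⟩ *
        (if r = s i then u i s - u i (Function.update s i t) else 0) = _
    by_cases h : s i = r
    · rw [if_pos h.symm, if_pos h, if_pos h]; ring
    · rw [if_neg (fun hh => h hh.symm), if_neg h, if_neg h]; ring
  calc ∑ r, ∑ t, ∑ s : ∀ j, C j, (∏ j, ρ j (s j)) * y ⟨i, (r, t)⟩ * uM0 u s ⟨i, (r, t)⟩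
      = ∑ r, ∑ t, y ⟨i, (r, t)⟩ * (ρ i r * Vfun u ρ i r - ρ i r * Vfun u ρ i t) := by
        apply Finset.sum_congr rfl; intro r _
        apply Finset.sum_congr rfl; intro t _
        exact inner r t
    _ = (∑ r, (ρ i r * Vfun u ρ i r) * ∑ t, y ⟨i, (r, t)⟩)
        - ∑ r, ∑ t, y ⟨i, (r, t)⟩ * (ρ i r * Vfun u ρ i t) := by
        rw [← Finset.sum_sub_distrib]
        apply Finset.sum_congr rfl; intro r _
        rw [Finset.mul_sum, ← Finset.sum_sub_distrib]
        apply Finset.sum_congr rfl; intro t _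
        ring
    _ = (∑ r, (ρ i r * Vfun u ρ i r) * ∑ t, y ⟨i, (r, t)⟩)
        - ∑ t, Vfun u ρ i t * ∑ r, ρ i r * y ⟨i, (r, t)⟩ := by
        congr 1
        rw [Finset.sum_comm]
        apply Finset.sum_congr rfl; intro t _
        rw [Finset.mul_sum]
        apply Finset.sum_congr rfl; intro r _
        ring
    _ = 0 := by
        rw [show ∀ P Q : ℝ, P - Q = 0 ↔ P = Q from fun P Q => sub_eq_zero]
        apply Finset.sum_congr rfl
        intro t _
        rw [← hbal i t]
        ring

end KC

section Glue
set_option linter.unusedSectionVars false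
variable {I : Type*} [Fintype I] {C : I → Type*} [∀ i, Fintype (C i)]

lemma prod_mem_simplex [Nonempty I] [∀ i, Nonempty (C i)] {ρ : ∀ i, C i → ℝ}
    (hρ : ∀ i, ρ i ∈ stdSimplex ℝ (C i)) :
    (fun s : ∀ j, C j => ∏ j, ρ j (s j)) ∈ stdSimplex ℝ (∀ j, C j) := by
  constructor
  · intro s
    exact Finset.prod_nonneg fun j _ => (hρ j).1 (s j)
  · show ∑ s : ∀ j, C j, ∏ j, ρ j (s j) = 1
    rw [← Fintype.prod_sum (f := fun i c => ρ i c)]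
    rw [Finset.prod_congr rfl fun i _ => (hρ i).2]
    simp

end Glue

/-- Hart and Schmeidler's key lemma: for any mixed strategy `y` of the minimizer in `Γ⁰`,
any product of maximin strategies of the auxiliary games `γ(yᵢ)` gets payoff exactly `0`
against `y` (hence is a good reply to `y`); in particular `v(Γ⁰) = 0` and the set of
product distributions is good in `Γ⁰`. -/
theorem hs_lemma {I : Type*} [Fintype I] {C : I → Type*} [∀ i, Fintype (C i)]
    (hI : 2 ≤ Fintype.card I) (hC : ∀ i, 2 ≤ Fintype.card (C i))
    (u : ∀ i : I, (∀ j, C j) → ℝ)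
    (y : (Σ i : I, C i × C i) → ℝ) (hy : y ∈ stdSimplex ℝ (Σ i : I, C i × C i)) :
    (∀ ρ : ∀ i, C i → ℝ,
      (∀ i, ρ i ∈ maximin (gammaU (fun a b : C i => y ⟨i, (a, b)⟩))) →
        expPay (uM0 u) (fun s => ∏ i, ρ i (s i)) y = 0 ∧
        GoodReply (uM0 u) (fun s => ∏ i, ρ i (s i)) y) ∧
    gameValue (uM0 u) = 0 ∧
    IsGood (uM0 u) (prodDists C) := by
  haveI : Nonempty I := Fintype.card_pos_iff.mp (by omega)
  haveI hCne : ∀ i, Nonempty (C i) := fun i => Fintype.card_pos_iff.mp (by have := hC i; omega)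
  haveI : Nonempty (∀ j, C j) := ⟨fun j => Classical.arbitrary (C j)⟩
  haveI : Nonempty (Σ i : I, C i × C i) :=
    ⟨⟨Classical.arbitrary I, (Classical.arbitrary _, Classical.arbitrary _)⟩⟩
  -- balance from maximin
  have hmaxbal : ∀ (ρ : ∀ i, C i → ℝ),
      (∀ i, ρ i ∈ maximin (gammaU (fun a b : C i => y ⟨i, (a, b)⟩))) →
      ∀ i (b : C i), ρ i b * (∑ r, y ⟨i, (b, r)⟩) = ∑ a, ρ i a * y ⟨i, (a, b)⟩ := by
    intro ρ hρ i
    apply balanced_eq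
    have hgv : (0:ℝ) ≤ gameValue (gammaU (fun a b : C i => y ⟨i, (a, b)⟩)) := by
      obtain ⟨σ, hσ, hcol⟩ := exists_balanced (fun a b : C i => y ⟨i, (a, b)⟩)
        (fun a b => hy.1 _)
      exact le_gameValue hσ (fun b => (hcol b).ge)
    have hnn : ∀ b, 0 ≤ colPay (gammaU (fun a b : C i => y ⟨i, (a, b)⟩)) (ρ i) b :=
      fun b => le_trans hgv (maximin_colPay (hρ i) b)
    have hz := sum_colPay_gamma (fun a b : C i => y ⟨i, (a, b)⟩) (ρ i)
    exact fun b =>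
      (Finset.sum_eq_zero_iff_of_nonneg (fun b _ => hnn b)).mp hz b (Finset.mem_univ b)
  have part1 : ∀ ρ : ∀ i, C i → ℝ,
      (∀ i, ρ i ∈ maximin (gammaU (fun a b : C i => y ⟨i, (a, b)⟩))) →
      expPay (uM0 u) (fun s => ∏ i, ρ i (s i)) y = 0 :=
    fun ρ hρ => key_computation u y ρ (hmaxbal ρ hρ)
  -- value ≤ 0
  have hle : gameValue (uM0 u) ≤ 0 := by
    apply gameValue_le
    intro σ hσ
    have i0 : I := Classical.arbitrary I
    have c0 : C i0 := Classical.arbitrary (C i0)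
    refine ⟨⟨i0, (c0, c0)⟩, le_of_eq ?_⟩
    rw [colPay]
    apply Finset.sum_eq_zero
    intro s _
    have hz : uM0 u s ⟨i0, (c0, c0)⟩ = 0 := by
      show (if c0 = s i0 then u i0 s - u i0 (Function.update s i0 c0) else 0) = 0
      by_cases h : c0 = s i0
      · rw [if_pos h, h, Function.update_eq_self, sub_self]
      · rw [if_neg h]
    rw [hz, mul_zero]
  -- value ≥ 0
  have hgenv : (0:ℝ) ≤ gameValue (uM0 u) := by
    rcases matrix_alternative (uM0 u) with ⟨σ, hσ, hcol⟩ | ⟨θ, hθ, hrow⟩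
    · exact le_gameValue hσ hcol
    · exfalso
      choose ρ hρmem hρcol using fun i =>
        exists_balanced (fun a b : C i => θ ⟨i, (a, b)⟩) (fun a b => hθ.1 _)
      have h0 := key_computation u θ ρ (fun i => balanced_eq (hρcol i))
      rw [expPay_eq_row] at h0
      have hπ := prod_mem_simplex hρmem
      have hterm : ∀ s : ∀ j, C j,
          (∏ j, ρ j (s j)) * rowPay (uM0 u) θ s ≤ 0 :=
        fun s => mul_nonpos_iff.mpr (Or.inl ⟨hπ.1 s, (hrow s).le⟩)
      have hall := (Finset.sum_eq_zero_iff_of_nonpos (fun s _ => hterm s)).mp h0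
      have hzero : ∀ s : ∀ j, C j, (∏ j, ρ j (s j)) = 0 := by
        intro s
        rcases mul_eq_zero.mp (hall s (Finset.mem_univ s)) with h | h
        · exact h
        · exact absurd h (ne_of_lt (hrow s))
      have hone := hπ.2
      rw [Finset.sum_congr rfl (fun s _ => hzero s)] at hone
      simp at hone
  have hval : gameValue (uM0 u) = 0 := le_antisymm hle hgenv
  refine ⟨?_, hval, ?_⟩
  · intro ρ hρ
    have h0 := part1 ρ hρ
    exact ⟨h0, by rw [GoodReply, hval, h0]⟩
  · intro θ hθ
    choose ρ hρmem hρcol using fun i =>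
      exists_balanced (fun a b : C i => θ ⟨i, (a, b)⟩) (fun a b => hθ.1 _)
    refine ⟨fun s => ∏ i, ρ i (s i), ⟨ρ, hρmem, rfl⟩, ?_⟩
    rw [GoodReply, hval, key_computation u θ ρ (fun i => balanced_eq (hρcol i))]
end

section
/- For any finite game Γ, the value of the auxiliary zero-sum game satisfies v(Γ^0) = 0, maximin(Γ^0) = CE(Γ), and consequently Γ has a correlated equilibrium. -/
open Finset
open scoped Classical BigOperators

open Filter
open scoped Topology
set_option linter.unusedSectionVars false
set_option linter.unusedVariables false
set_option maxHeartbeats 2000000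

instance stdSimplex.instNonempty {X : Type*} [Fintype X] [Nonempty X] :
    Nonempty (stdSimplex ℝ X) :=
  ⟨⟨_, single_mem_stdSimplex ℝ (Classical.arbitrary X)⟩⟩

section ZeroSum
variable {A B : Type*} [Fintype A] [Fintype B] [Nonempty A] [Nonempty B] (u : A → B → ℝ)

noncomputable def payA (σ : A → ℝ) (b : B) : ℝ := ∑ a, σ a * u a b

noncomputable def pureStrat {X : Type*} (x : X) : X → ℝ :=
  fun y => if y = x then 1 else 0

lemma pureStrat_mem {X : Type*} [Fintype X] (x : X) :
    pureStrat x ∈ stdSimplex ℝ X := by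
  constructor
  · intro y; unfold pureStrat; split <;> norm_num
  · simp [pureStrat]

lemma expPay_eq (σ : A → ℝ) (θ : B → ℝ) :
    expPay u σ θ = ∑ b, θ b * payA u σ b := by
  rw [expPay, Finset.sum_comm]
  congr 1; ext b
  rw [payA, Finset.mul_sum]
  congr 1; ext a; ring

lemma expPay_pure (σ : A → ℝ) (b : B) :
    expPay u σ (pureStrat b) = payA u σ b := by
  rw [expPay_eq]
  simp [pureStrat, ite_mul]

/-- the guaranteed payoff of σ : min over pure minimizer strategies -/
noncomputable def valF (σ : A → ℝ) : ℝ :=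
  Finset.univ.inf' Finset.univ_nonempty (payA u σ)

lemma valF_le_expPay {σ : A → ℝ} {θ : B → ℝ} (hθ : θ ∈ stdSimplex ℝ B) :
    valF u σ ≤ expPay u σ θ := by
  rw [expPay_eq]
  calc valF u σ = ∑ b, θ b * valF u σ := by
        rw [← Finset.sum_mul, hθ.2, one_mul]
    _ ≤ ∑ b, θ b * payA u σ b := by
        apply Finset.sum_le_sum
        intro b _
        exact mul_le_mul_of_nonneg_left (Finset.inf'_le _ (Finset.mem_univ b)) (hθ.1 b)

lemma iInf_expPay_eq (σ : A → ℝ) :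
    (⨅ θ : stdSimplex ℝ B, expPay u σ θ.1) = valF u σ := by
  apply le_antisymm
  · obtain ⟨b, -, hb⟩ := Finset.exists_mem_eq_inf' (Finset.univ_nonempty) (payA u σ)
    have : (⨅ θ : stdSimplex ℝ B, expPay u σ θ.1) ≤ expPay u σ (pureStrat b) := by
      apply ciInf_le ⟨valF u σ, ?_⟩ (⟨pureStrat b, pureStrat_mem b⟩ : stdSimplex ℝ B)
      rintro x ⟨θ, rfl⟩
      exact valF_le_expPay u θ.2
    rw [expPay_pure] at this
    rw [valF, hb]; exact this
  · exact le_ciInf fun θ => valF_le_expPay u θ.2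

lemma gameValue_eq_iSup : gameValue u = ⨆ σ : stdSimplex ℝ A, valF u σ.1 := by
  rw [gameValue]; congr 1; ext σ; exact iInf_expPay_eq u σ.1

lemma continuous_valF : Continuous (valF u) := by
  apply Continuous.finset_inf'_apply
  intro b _
  exact continuous_finset_sum _ fun a _ => (continuous_apply a).mul continuous_const

lemma exists_maximin : ∃ σ ∈ stdSimplex ℝ A, ∀ σ' ∈ stdSimplex ℝ A, valF u σ' ≤ valF u σ := by
  obtain ⟨σ, hσ, h⟩ := (isCompact_stdSimplex ℝ A).exists_isMaxOn
    ⟨_, pureStrat_mem (Classical.arbitrary A)⟩ (continuous_valF u).continuousOn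
  exact ⟨σ, hσ, h⟩

lemma gameValue_eq_max {σ : A → ℝ} (hσ : σ ∈ stdSimplex ℝ A)
    (h : ∀ σ' ∈ stdSimplex ℝ A, valF u σ' ≤ valF u σ) : gameValue u = valF u σ := by
  rw [gameValue_eq_iSup]
  apply le_antisymm
  · exact ciSup_le fun σ' => h σ'.1 σ'.2
  · exact le_ciSup_of_le ⟨valF u σ, by rintro x ⟨σ', rfl⟩; exact h σ'.1 σ'.2⟩ ⟨σ, hσ⟩ le_rfl


-- lemma needed for the separation argument
lemma valF_le_gameValue {σ : A → ℝ} (hσ : σ ∈ stdSimplex ℝ A) :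
    Finset.univ.inf' Finset.univ_nonempty (payA u σ) ≤ gameValue u := by
  obtain ⟨σm, hm, hmax⟩ := exists_maximin u
  rw [gameValue_eq_max u hm hmax]
  exact hmax σ hσ

/-- the separating mixed strategy of the minimizer -/
lemma exists_min_strategy :
    ∃ θ ∈ stdSimplex ℝ B, ∀ σ ∈ stdSimplex ℝ A, expPay u σ θ ≤ gameValue u := by
  set v := gameValue u with hv
  set Cset : Set (B → ℝ) := (fun σ => payA u σ) '' stdSimplex ℝ A with hCset
  set K : Set (B → ℝ) := Set.univ.pi (fun _ => Set.Ioi v) with hK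
  have hKopen : IsOpen K := isOpen_set_pi Set.finite_univ (fun _ _ => isOpen_Ioi)
  have hKconv : Convex ℝ K := convex_pi (fun _ _ => convex_Ioi v)
  have hlin : IsLinearMap ℝ (fun σ : A → ℝ => payA u σ) := by
    constructor
    · intro σ τ; funext b
      simp only [payA, Pi.add_apply, add_mul]
      exact Finset.sum_add_distrib
    · intro c σ; funext b
      simp only [payA, Pi.smul_apply, smul_eq_mul, Finset.mul_sum]
      exact Finset.sum_congr rfl fun a _ => by ring
  have hCconv : Convex ℝ Cset := (convex_stdSimplex ℝ A).is_linear_image hlin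
  have hdisj : Disjoint K Cset := by
    rw [Set.disjoint_left]
    rintro x hxK ⟨σ, hσ, rfl⟩
    obtain ⟨b0, -, hb0⟩ := Finset.exists_mem_eq_inf' (Finset.univ_nonempty) (payA u σ)
    have h1 : v < payA u σ b0 := hxK b0 (Set.mem_univ b0)
    have h2 : payA u σ b0 ≤ v := by rw [← hb0]; exact valF_le_gameValue u hσ
    linarith
  obtain ⟨f, cu, hfK, hfC⟩ := geometric_hahn_banach_open hKconv hKopen hCconv hdisj
  set y : B → ℝ := fun b => f (pureStrat b) with hy
  have hfx : ∀ x : B → ℝ, f x = ∑ b, x b * y b := by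
    intro x
    have hxe : x = ∑ b, x b • pureStrat b := by
      funext b'
      simp [pureStrat, Finset.sum_apply, mul_ite, mul_one, mul_zero]
    conv_lhs => rw [hxe]
    rw [map_sum]
    simp [smul_eq_mul]
    rfl
  have hconst : ∀ c : ℝ, f (fun _ => c) = c * ∑ b, y b := by
    intro c
    rw [hfx]; rw [Finset.mul_sum]
  have hconstK : ∀ c : ℝ, v < c → (fun _ : B => c) ∈ K := by
    intro c hc b _; exact hc
  have hyneg : ∀ b, y b ≤ 0 := by
    intro b
    by_contra hpos
    push_neg at hpos
    set c1 : ℝ := f (fun _ => v + 1) with hc1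
    have hstep : ∀ t : ℝ, 0 ≤ t → c1 + t * y b < cu := by
      intro t htn
      have hmem : ((fun _ : B => v + 1) + t • pureStrat b) ∈ K := by
        intro b' _
        simp only [Pi.add_apply, Pi.smul_apply, smul_eq_mul, Set.mem_Ioi]
        have : 0 ≤ t * pureStrat b b' := mul_nonneg htn ((pureStrat_mem b).1 b')
        linarith
      have := hfK _ hmem
      rw [map_add, map_smul, smul_eq_mul] at this
      exact this
    set t : ℝ := max 0 ((cu - c1) / y b + 1) with ht
    have h1 := hstep t (le_max_left _ _)
    have h2 : ((cu - c1) / y b + 1) * y b ≤ t * y b :=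
      mul_le_mul_of_nonneg_right (le_max_right _ _) hpos.le
    have h3 : ((cu - c1) / y b + 1) * y b = cu - c1 + y b := by
      field_simp
    nlinarith
  have hCne : (payA u (pureStrat (Classical.arbitrary A))) ∈ Cset :=
    ⟨_, pureStrat_mem _, rfl⟩
  have hyne : ∃ b, y b < 0 := by
    by_contra hall
    push_neg at hall
    have hy0 : ∀ b, y b = 0 := fun b => le_antisymm (hyneg b) (hall b)
    have hf0 : ∀ x, f x = 0 := by
      intro x; rw [hfx]; simp [hy0]
    have h1 : (0:ℝ) < cu := by
      have := hfK _ (hconstK (v+1) (by linarith))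
      rwa [hf0] at this
    have h2 : cu ≤ 0 := by
      have := hfC _ hCne
      rwa [hf0] at this
    linarith
  obtain ⟨b1, hb1⟩ := hyne
  set S : ℝ := ∑ b, -y b with hS
  have hSpos : 0 < S := by
    rw [hS]
    have : ∀ b ∈ Finset.univ, 0 ≤ -y b := fun b _ => by linarith [hyneg b]
    calc (0:ℝ) < -y b1 := by linarith
      _ ≤ ∑ b, -y b := Finset.single_le_sum this (Finset.mem_univ b1)
  refine ⟨fun b => -y b / S, ⟨?_, ?_⟩, ?_⟩
  · intro b; apply div_nonneg (by linarith [hyneg b]) hSpos.le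
  · rw [← Finset.sum_div, ← hS, div_self hSpos.ne']
  · intro σ hσ
    have hfσ : cu ≤ f (payA u σ) := hfC _ ⟨σ, hσ, rfl⟩
    rw [hfx] at hfσ
    have key : ∀ ε : ℝ, 0 < ε → -(v + ε) * S < cu := by
      intro ε hε
      have := hfK _ (hconstK (v + ε) (by linarith))
      rw [hconst] at this
      have hsum : ∑ b, y b = -S := by
        rw [hS, ← Finset.sum_neg_distrib]
        simp
      rw [hsum] at this
      linarith [this]
    have hvS : -v * S ≤ cu := by
      by_contra h
      push_neg at h
      have hε : (0:ℝ) < (-v * S - cu) / (2 * S) := by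
        apply div_pos (by linarith) (by linarith)
      have := key _ hε
      have h2 : -(v + (-v * S - cu) / (2 * S)) * S = -v*S - (-v*S - cu)/2 := by
        field_simp; ring
      rw [h2] at this
      linarith
    rw [expPay_eq]
    have hcalc : ∑ b, (-y b / S) * payA u σ b = (-(∑ b, payA u σ b * y b)) / S := by
      calc ∑ b, (-y b / S) * payA u σ b = ∑ b, -(payA u σ b * y b) / S :=
            Finset.sum_congr rfl fun b _ => by ring
        _ = (∑ b, -(payA u σ b * y b)) / S := by rw [Finset.sum_div]
        _ = (-(∑ b, payA u σ b * y b)) / S := by rw [Finset.sum_neg_distrib]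
    rw [hcalc]
    rw [div_le_iff₀ hSpos]
    linarith

end ZeroSum

section Stationary
variable {S : Type*} [Fintype S] [Nonempty S]

lemma stdSimplex_le_one {ν : S → ℝ} (hν : ν ∈ stdSimplex ℝ S) (t : S) : ν t ≤ 1 := by
  have := Finset.single_le_sum (f := ν) (fun r _ => hν.1 r) (Finset.mem_univ t)
  rwa [hν.2] at this

/-- a row-stochastic matrix has a stationary distribution -/
lemma exists_stationary (P : S → S → ℝ) (h0 : ∀ r t, 0 ≤ P r t)
    (h1 : ∀ r, ∑ t, P r t = 1) :
    ∃ ρ ∈ stdSimplex ℝ S, ∀ t, ∑ r, ρ r * P r t = ρ t := by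
  set step : (S → ℝ) → (S → ℝ) := fun μ t => ∑ r, μ r * P r t with hstep
  have hstep_mem : ∀ μ ∈ stdSimplex ℝ S, step μ ∈ stdSimplex ℝ S := by
    intro μ hμ
    constructor
    · intro t; exact Finset.sum_nonneg fun r _ => mul_nonneg (hμ.1 r) (h0 r t)
    · rw [show ∑ t, step μ t = ∑ r, μ r * ∑ t, P r t from by
        rw [Finset.sum_comm]; exact Finset.sum_congr rfl fun r _ => (Finset.mul_sum _ _ _).symm]
      simp only [h1, mul_one]
      exact hμ.2
  have hstep_cont : Continuous step :=
    continuous_pi fun t => continuous_finset_sum _ fun r _ =>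
      (continuous_apply r).mul continuous_const
  set μ0 : S → ℝ := fun _ => (Fintype.card S : ℝ)⁻¹ with hμ0
  have hμ0mem : μ0 ∈ stdSimplex ℝ S := by
    constructor
    · intro t; positivity
    · simp only [hμ0, Finset.sum_const, Finset.card_univ, nsmul_eq_mul]
      rw [mul_inv_cancel₀]
      exact_mod_cast Fintype.card_ne_zero
  set μn : ℕ → (S → ℝ) := fun n => step^[n] μ0 with hμn
  have hμnmem : ∀ n, μn n ∈ stdSimplex ℝ S := by
    intro n
    induction n with
    | zero => simpa [hμn] using hμ0mem
    | succ k ih =>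
      show step^[k+1] μ0 ∈ stdSimplex ℝ S
      rw [Function.iterate_succ_apply']
      exact hstep_mem _ ih
  set Av : ℕ → (S → ℝ) := fun N t => (∑ n ∈ Finset.range (N + 1), μn n t) / (N + 1) with hAv
  have hAvmem : ∀ N, Av N ∈ stdSimplex ℝ S := by
    intro N
    constructor
    · intro t
      apply div_nonneg (Finset.sum_nonneg fun n _ => (hμnmem n).1 t) (by positivity)
    · rw [show ∑ t, Av N t = (∑ n ∈ Finset.range (N + 1), ∑ t, μn n t) / (N + 1) from by
        rw [← Finset.sum_div, Finset.sum_comm]]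
      simp only [fun n => (hμnmem n).2]
      rw [Finset.sum_const, Finset.card_range, nsmul_eq_mul]
      field_simp
      norm_num
  obtain ⟨ρ, hρmem, φ, hφ, hconv⟩ := (isCompact_stdSimplex ℝ S).tendsto_subseq hAvmem
  refine ⟨ρ, hρmem, ?_⟩
  have key : ∀ N, step (Av N) = Av N + fun t => (μn (N + 1) t - μ0 t) / (N + 1) := by
    intro N
    funext t
    have h2 : step (Av N) t = (∑ n ∈ Finset.range (N + 1), step (μn n) t) / (N + 1) := by
      show ∑ r, Av N r * P r t = (∑ n ∈ Finset.range (N + 1), ∑ r, μn n r * P r t) / (N + 1)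
      calc ∑ r, Av N r * P r t
          = ∑ r, (∑ n ∈ Finset.range (N + 1), μn n r * P r t) / (N + 1) := by
            apply Finset.sum_congr rfl
            intro r _
            simp only [hAv]
            rw [div_mul_eq_mul_div, Finset.sum_mul]
        _ = (∑ r, ∑ n ∈ Finset.range (N + 1), μn n r * P r t) / (N + 1) := by
            rw [Finset.sum_div]
        _ = (∑ n ∈ Finset.range (N + 1), ∑ r, μn n r * P r t) / (N + 1) := by
            rw [Finset.sum_comm]
    have h3 : ∀ n, step (μn n) t = μn (n + 1) t := by
      intro n
      rw [hμn]
      simp [Function.iterate_succ_apply']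
    rw [h2]
    simp only [h3]
    have e1 := Finset.sum_range_succ' (fun n => μn n t) (N + 1)
    have e2 := Finset.sum_range_succ (fun n => μn n t) (N + 1)
    have h4 : ∑ n ∈ Finset.range (N + 1), μn (n + 1) t
        = ∑ n ∈ Finset.range (N + 1), μn n t + (μn (N + 1) t - μn 0 t) := by
      linarith
    rw [h4]
    have h5 : μn 0 t = μ0 t := by simp [hμn]
    rw [h5, add_div]
    simp only [hAv, Pi.add_apply]
  have herr : Tendsto (fun k => (fun t => (μn (φ k + 1) t - μ0 t) / (φ k + 1) : S → ℝ))
      atTop (𝓝 0) := by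
    rw [tendsto_pi_nhds]
    intro t
    rw [Pi.zero_apply]
    refine squeeze_zero_norm (f := fun k => (μn (φ k + 1) t - μ0 t) / ((φ k : ℝ) + 1)) (a := fun k => 2 / ((k : ℝ) + 1)) (fun k => ?_) ?_
    · 
      rw [Real.norm_eq_abs, abs_div]
      have hnum : |μn (φ k + 1) t - μ0 t| ≤ 2 := by
        have a1 := (hμnmem (φ k + 1)).1 t
        have a2 := stdSimplex_le_one (hμnmem (φ k + 1)) t
        have a3 := hμ0mem.1 t
        have a4 := stdSimplex_le_one hμ0mem t
        rw [abs_le]; constructor <;> linarith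
      have hden : ((k : ℝ) + 1) ≤ |((φ k : ℝ) + 1)| := by
        rw [abs_of_pos (by positivity)]
        have := hφ.le_apply (x := k)
        exact_mod_cast Nat.succ_le_succ this
      exact div_le_div₀ (by norm_num) hnum (by positivity) hden
    · have := tendsto_one_div_add_atTop_nhds_zero_nat (𝕜 := ℝ)
      have h2 := this.const_mul (2:ℝ)
      simp only [mul_zero] at h2
      convert h2 using 2 with k
      ring
  have h5 : Tendsto (fun k => step (Av (φ k))) atTop (𝓝 (step ρ)) :=
    (hstep_cont.tendsto ρ).comp hconv
  have h6 : Tendsto (fun k => step (Av (φ k))) atTop (𝓝 ρ) := by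
    simp only [key]
    have := hconv.add herr
    simpa using this
  have hfix : step ρ = ρ := tendsto_nhds_unique h5 h6
  intro t
  exact congrFun hfix t
end Stationary

section App
variable {I : Type*} [Fintype I] {C : I → Type*} [∀ i, Fintype (C i)]
  [Nonempty I] [∀ i, Nonempty (C i)] (u : ∀ i : I, (∀ j, C j) → ℝ)

-- facts about piSplitAt
lemma split_apply_self (i : I) (x : C i) (z : ∀ j : {j // j ≠ i}, C j.1) :
    ((Equiv.piSplitAt i C).symm (x, z)) i = x := by
  simp [Equiv.piSplitAt]

lemma split_apply_ne (i : I) (x : C i) (z : ∀ j : {j // j ≠ i}, C j.1)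
    {j : I} (hj : j ≠ i) :
    ((Equiv.piSplitAt i C).symm (x, z)) j = z ⟨j, hj⟩ := by
  simp [Equiv.piSplitAt, hj]

lemma split_update (i : I) (x t : C i) (z : ∀ j : {j // j ≠ i}, C j.1) :
    Function.update ((Equiv.piSplitAt i C).symm (x, z)) i t
      = (Equiv.piSplitAt i C).symm (t, z) := by
  funext j
  rcases eq_or_ne j i with rfl | hj
  · rw [Function.update_self, split_apply_self]
  · rw [Function.update_of_ne hj, split_apply_ne _ _ _ hj, split_apply_ne _ _ _ hj]

lemma split_sum (f : (∀ j, C j) → ℝ) (i : I) :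
    ∑ s, f s = ∑ x : C i, ∑ z : ∀ j : {j // j ≠ i}, C j.1,
      f ((Equiv.piSplitAt i C).symm (x, z)) := by
  calc ∑ s, f s
      = ∑ p : C i × (∀ j : {j // j ≠ i}, C j.1), f ((Equiv.piSplitAt i C).symm p) :=
        (Equiv.sum_comp (Equiv.piSplitAt i C).symm f).symm
    _ = ∑ x : C i, ∑ z : ∀ j : {j // j ≠ i}, C j.1, f ((Equiv.piSplitAt i C).symm (x, z)) :=
        Fintype.sum_prod_type (f := fun p => f ((Equiv.piSplitAt i C).symm p))

lemma split_prod (ρ : ∀ i, C i → ℝ) (i : I) (x : C i) (z : ∀ j : {j // j ≠ i}, C j.1) :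
    (∏ j, ρ j (((Equiv.piSplitAt i C).symm (x, z)) j))
      = ρ i x * ∏ j : {j // j ≠ i}, ρ j.1 (z j) := by
  rw [← Finset.mul_prod_erase Finset.univ _ (Finset.mem_univ i), split_apply_self]
  congr 1
  rw [Finset.prod_subtype (Finset.univ.erase i) (p := fun j => j ≠ i)
    (fun j => by simp [Finset.mem_erase])
    (fun j => ρ j (((Equiv.piSplitAt i C).symm (x, z)) j))]
  apply Finset.prod_congr rfl
  intro j _
  rw [split_apply_ne _ _ _ j.2]

lemma exists_product_zero (θ : (Σ i : I, C i × C i) → ℝ)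
    (hθ : θ ∈ stdSimplex ℝ (Σ i : I, C i × C i)) :
    ∃ σ ∈ stdSimplex ℝ (∀ j, C j), expPay (uM0 u) σ θ = 0 := by
  set w : ∀ i, C i → C i → ℝ := fun i r t => θ ⟨i, (r, t)⟩ with hw
  have hw0 : ∀ i r t, 0 ≤ w i r t := fun i r t => hθ.1 _
  have hwsum : ∀ i (r : C i), ∑ t, w i r t ≤ 1 := by
    intro i r
    have h1 : ∑ t, w i r t = ∑ b ∈ Finset.univ.image (fun t : C i => (⟨i, (r, t)⟩ : Σ i, C i × C i)), θ b := by
      rw [Finset.sum_image]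
      intro a _ b _ h
      simpa using h
    rw [h1, ← hθ.2]
    apply Finset.sum_le_sum_of_subset_of_nonneg (Finset.subset_univ _)
    intro b _ _
    exact hθ.1 b
  -- the Markov matrices
  set P : ∀ i, C i → C i → ℝ :=
    fun i r t => w i r t + (if t = r then 1 - ∑ t', w i r t' else 0) with hP
  have hP0 : ∀ i (r t : C i), 0 ≤ P i r t := by
    intro i r t
    have hterm : w i r t ≤ ∑ t', w i r t' :=
      Finset.single_le_sum (f := fun t' => w i r t') (fun t' _ => hw0 i r t') (Finset.mem_univ t)
    by_cases h : t = r
    · simp only [hP, if_pos h]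
      have := hwsum i r
      have := hw0 i r t
      linarith
    · simp only [hP, if_neg h, add_zero]
      exact hw0 i r t
  have hP1 : ∀ i (r : C i), ∑ t, P i r t = 1 := by
    intro i r
    simp only [hP]
    rw [Finset.sum_add_distrib, Finset.sum_ite_eq' Finset.univ r (fun _ => 1 - ∑ t', w i r t')]
    simp
  -- stationary distributions
  have hstat : ∀ i, ∃ ρ ∈ stdSimplex ℝ (C i), ∀ t, ∑ r, ρ r * P i r t = ρ t :=
    fun i => exists_stationary (P i) (hP0 i) (hP1 i)
  choose ρ hρmem hρstat using hstat
  -- the balance equations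
  have hbal : ∀ i (t : C i), ∑ r, ρ i r * w i r t = ρ i t * ∑ t', w i t t' := by
    intro i t
    have h1 := hρstat i t
    simp only [hP] at h1
    have h2 : ∑ r, ρ i r * (w i r t + if t = r then 1 - ∑ t', w i r t' else 0)
        = ∑ r, ρ i r * w i r t + ρ i t * (1 - ∑ t', w i t t') := by
      rw [Finset.sum_congr rfl (fun r _ =>
        (show ρ i r * (w i r t + if t = r then 1 - ∑ t', w i r t' else 0)
          = ρ i r * w i r t + (if t = r then ρ i r * (1 - ∑ t', w i r t') else 0) from by
          split_ifs with h
          · subst h; ring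
          · ring))]
      rw [Finset.sum_add_distrib, Finset.sum_ite_eq Finset.univ t
        (fun r => ρ i r * (1 - ∑ t', w i r t'))]
      simp
    rw [h2] at h1
    linarith
  set σ : (∀ j, C j) → ℝ := fun s => ∏ i, ρ i (s i) with hσ
  have hσmem : σ ∈ stdSimplex ℝ (∀ j, C j) := by
    constructor
    · intro s; exact Finset.prod_nonneg fun i _ => (hρmem i).1 (s i)
    · rw [hσ, ← Fintype.prod_sum (fun i (x : C i) => ρ i x)]
      simp only [fun i => (hρmem i).2]
      exact Finset.prod_const_one
  refine ⟨σ, hσmem, ?_⟩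
  -- conditional expected utilities
  set U : ∀ i, C i → ℝ := fun i x => ∑ z : ∀ j : {j // j ≠ i}, C j.1,
    (∏ j : {j // j ≠ i}, ρ j.1 (z j)) * u i ((Equiv.piSplitAt i C).symm (x, z)) with hU
  have inner_eq : ∀ (i : I) (r t : C i),
      (∑ s, σ s * θ ⟨i, (r, t)⟩ * uM0 u s ⟨i, (r, t)⟩)
        = w i r t * (ρ i r * (U i r - U i t)) := by
    intro i r t
    rw [split_sum (fun s => σ s * θ ⟨i, (r, t)⟩ * uM0 u s ⟨i, (r, t)⟩) i]
    have hterm : ∀ (x : C i) (z : ∀ j : {j // j ≠ i}, C j.1),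
        σ ((Equiv.piSplitAt i C).symm (x, z)) * θ ⟨i, (r, t)⟩
            * uM0 u ((Equiv.piSplitAt i C).symm (x, z)) ⟨i, (r, t)⟩
          = if r = x then
              w i r t * (ρ i r * ((∏ j : {j // j ≠ i}, ρ j.1 (z j))
                * (u i ((Equiv.piSplitAt i C).symm (x, z))
                  - u i ((Equiv.piSplitAt i C).symm (t, z))))) else 0 := by
      intro x z
      rw [show uM0 u ((Equiv.piSplitAt i C).symm (x, z)) ⟨i, (r, t)⟩
          = if r = x then u i ((Equiv.piSplitAt i C).symm (x, z))
              - u i ((Equiv.piSplitAt i C).symm (t, z)) else 0 from by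
        unfold uM0
        rw [split_apply_self, split_update]]
      split_ifs with h
      · subst h
        simp only [hσ]
        rw [split_prod ρ i r z]
        simp only [hw]
        ring
      · ring
    rw [Finset.sum_congr rfl (fun x _ => Finset.sum_congr rfl (fun z _ => hterm x z))]
    rw [Finset.sum_comm]
    rw [Finset.sum_congr rfl (fun z (_ : z ∈ Finset.univ) => by
      rw [Finset.sum_ite_eq Finset.univ r (fun x =>
        w i r t * (ρ i r * ((∏ j : {j // j ≠ i}, ρ j.1 (z j))
          * (u i ((Equiv.piSplitAt i C).symm (x, z))
            - u i ((Equiv.piSplitAt i C).symm (t, z))))))])]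
    simp only [Finset.mem_univ, if_true]
    rw [← Finset.mul_sum]
    congr 1
    rw [← Finset.mul_sum]
    congr 1
    simp only [hU]
    rw [← Finset.sum_sub_distrib]
    exact Finset.sum_congr rfl fun z _ => mul_sub _ _ _
  -- each player's block sums to zero
  have per_i : ∀ i, ∑ r, ∑ t, w i r t * (ρ i r * (U i r - U i t)) = 0 := by
    intro i
    rw [Finset.sum_congr rfl (fun r (_ : r ∈ Finset.univ) => Finset.sum_congr rfl
      (fun t _ => (show w i r t * (ρ i r * (U i r - U i t))
        = w i r t * (ρ i r * U i r) - w i r t * (ρ i r * U i t) from by ring)))]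
    rw [Finset.sum_congr rfl (fun r (_ : r ∈ Finset.univ) => Finset.sum_sub_distrib _ _)]
    rw [Finset.sum_sub_distrib]
    have e1 : ∑ r, (ρ i r * U i r) * ∑ t, w i r t
        = ∑ r, ∑ t, w i r t * (ρ i r * U i r) := by
      apply Finset.sum_congr rfl
      intro r _
      rw [Finset.mul_sum]
      exact Finset.sum_congr rfl fun t _ => mul_comm _ _
    have e2 : ∑ r, ∑ t, w i r t * (ρ i r * U i t)
        = ∑ t, (ρ i t * U i t) * ∑ t', w i t t' := by
      rw [Finset.sum_comm]
      apply Finset.sum_congr rfl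
      intro t _
      have h3 : ∑ r, w i r t * (ρ i r * U i t) = U i t * ∑ r, ρ i r * w i r t := by
        rw [Finset.mul_sum]
        exact Finset.sum_congr rfl fun r _ => by ring
      rw [h3, hbal i t]
      ring
    rw [← e1, e2]
    exact sub_self _
  -- assemble
  rw [expPay, Finset.sum_comm, ← Finset.univ_sigma_univ, Finset.sum_sigma]
  calc ∑ i, ∑ p : C i × C i, ∑ s, σ s * θ ⟨i, p⟩ * uM0 u s ⟨i, p⟩
      = ∑ i, ∑ r : C i, ∑ t : C i, ∑ s, σ s * θ ⟨i, (r, t)⟩ * uM0 u s ⟨i, (r, t)⟩ :=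
        Finset.sum_congr rfl fun i _ => Fintype.sum_prod_type
          (f := fun p : C i × C i => ∑ s, σ s * θ ⟨i, p⟩ * uM0 u s ⟨i, p⟩)
    _ = ∑ i, ∑ r : C i, ∑ t : C i, w i r t * (ρ i r * (U i r - U i t)) :=
        Finset.sum_congr rfl fun i _ => Finset.sum_congr rfl fun r _ =>
          Finset.sum_congr rfl fun t _ => inner_eq i r t
    _ = 0 := by
        rw [Finset.sum_congr rfl (fun i (_ : i ∈ Finset.univ) => per_i i)]
        exact Finset.sum_const_zero
end App

/-- Hart and Schmeidler's theorem: for any finite game `Γ`, the auxiliary zero-sum game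
`Γ⁰` has value `0`, its maximin strategies are exactly the correlated equilibria of `Γ`,
and in particular a correlated equilibrium exists. -/
theorem correlated_equilibrium_exists
    {I : Type*} [Fintype I] {C : I → Type*} [∀ i, Fintype (C i)]
    (hI : 2 ≤ Fintype.card I) (hC : ∀ i, 2 ≤ Fintype.card (C i))
    (u : ∀ i : I, (∀ j, C j) → ℝ) :
    gameValue (uM0 u) = 0 ∧ maximin (uM0 u) = CorrEq u ∧ (CorrEq u).Nonempty := by
  haveI hne : Nonempty I := Fintype.card_pos_iff.mp (by omega)
  haveI hneC : ∀ i, Nonempty (C i) := fun i => Fintype.card_pos_iff.mp (by have := hC i; omega)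
  haveI : Nonempty (∀ j, C j) := ⟨fun j => Classical.arbitrary _⟩
  haveI : Nonempty (Σ i : I, C i × C i) :=
    ⟨⟨Classical.arbitrary I, Classical.arbitrary _, Classical.arbitrary _⟩⟩
  -- payoff against "deviate to yourself" is zero
  have hpay0 : ∀ (σ : (∀ j, C j) → ℝ) (i : I) (r : C i),
      payA (uM0 u) σ ⟨i, (r, r)⟩ = 0 := by
    intro σ i r
    rw [payA]
    apply Finset.sum_eq_zero
    intro s _
    rw [show uM0 u s ⟨i, (r, r)⟩ = 0 from by
      rw [show uM0 u s ⟨i, (r, r)⟩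
          = if r = s i then u i s - u i (Function.update s i r) else 0 from rfl]
      split_ifs with h
      · rw [h, Function.update_eq_self, sub_self]
      · rfl]
    exact mul_zero _
  -- the value is at most 0
  have hub : gameValue (uM0 u) ≤ 0 := by
    rw [gameValue_eq_iSup]
    apply ciSup_le
    rintro ⟨σ, hσ⟩
    have h1 : valF (uM0 u) σ ≤ payA (uM0 u) σ
        ⟨Classical.arbitrary I, (Classical.arbitrary _, Classical.arbitrary _)⟩ :=
      Finset.inf'_le _ (Finset.mem_univ _)
    rw [hpay0] at h1
    exact h1
  -- the value is at least 0
  have hlb : (0 : ℝ) ≤ gameValue (uM0 u) := by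
    obtain ⟨θ, hθmem, hθle⟩ := exists_min_strategy (uM0 u)
    obtain ⟨σp, hσp, hzero⟩ := exists_product_zero u θ hθmem
    have := hθle σp hσp
    rw [hzero] at this
    exact this
  have hv : gameValue (uM0 u) = 0 := le_antisymm hub hlb
  -- payA is the negative of the correlated-equilibrium sums
  have payA_eq : ∀ (σ : (∀ j, C j) → ℝ) (i : I) (si ti : C i),
      payA (uM0 u) σ ⟨i, (si, ti)⟩
        = -∑ s : ∀ j, C j,
            (if s i = si then (u i (Function.update s i ti) - u i s) * σ s else 0) := by
    intro σ i si ti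
    rw [payA, ← Finset.sum_neg_distrib]
    apply Finset.sum_congr rfl
    intro s _
    rw [show uM0 u s ⟨i, (si, ti)⟩
        = if si = s i then u i s - u i (Function.update s i ti) else 0 from rfl]
    rcases eq_or_ne si (s i) with h | h
    · rw [if_pos h, if_pos h.symm]
      ring
    · rw [if_neg h, if_neg (Ne.symm h)]
      ring
  have hmm : maximin (uM0 u) = CorrEq u := by
    ext σ
    constructor
    · rintro ⟨hσΔ, h⟩
      refine ⟨hσΔ, ?_⟩
      intro i si ti
      have hb := h (pureStrat ⟨i, (si, ti)⟩) (pureStrat_mem _)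
      rw [expPay_pure, hv] at hb
      rw [payA_eq] at hb
      linarith
    · rintro ⟨hσΔ, hce⟩
      refine ⟨hσΔ, ?_⟩
      intro θ hθ
      rw [hv, expPay_eq]
      apply Finset.sum_nonneg
      rintro ⟨i, si, ti⟩ _
      apply mul_nonneg (hθ.1 _)
      rw [payA_eq]
      have := hce i si ti
      linarith
  refine ⟨hv, hmm, ?_⟩
  obtain ⟨σm, hm, hmax⟩ := exists_maximin (uM0 u)
  have hmem : σm ∈ maximin (uM0 u) := by
    refine ⟨hm, ?_⟩
    intro θ hθ
    rw [gameValue_eq_max (uM0 u) hm hmax]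
    exact valF_le_expPay (uM0 u) hθ
  exact ⟨σm, hmm ▸ hmem⟩
end

section
/- If a finite group G acts on the finite game Γ, then setting g·(s,(r_i,t_i)) = (g·s,(g·r_i,g·t_i)) defines a player-trivial action of G on the zero-sum game Γ^0; in particular u_M^0(g·s,(g·r_i,g·t_i)) = u_M^0(s,(r_i,t_i)) for all g ∈ G, s ∈ C, players i, and r_i, t_i ∈ C_i. -/
open Finset
open scoped Classical BigOperators

/-- An action of a group `G` on a finite game with player set `I`, strategy sets `C i`
and utilities `u`.  `actI` is the left action on players and `actS` the induced left
action on strategy profiles; `diagonal` expresses that the coordinate `g·i` of `g·s`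
depends only on the coordinate `i` of `s` (i.e. the profile action is induced by strategy
maps `g· : C i → C (g·i)`), and `utility_inv` is the utility compatibility condition
`u_{g·i}(g·s) = u_i(s)`. -/
structure GameAction (G : Type*) [Group G] {I : Type*} (C : I → Type*)
    (u : ∀ i : I, (∀ j, C j) → ℝ) where
  actI : G → I → I
  actS : G → (∀ j, C j) → (∀ j, C j)
  actI_one : ∀ i, actI 1 i = i
  actI_mul : ∀ g h i, actI (g * h) i = actI g (actI h i)
  actS_one : ∀ s, actS 1 s = s
  actS_mul : ∀ g h s, actS (g * h) s = actS g (actS h s)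
  diagonal : ∀ g s t i, s i = t i → actS g s (actI g i) = actS g t (actI g i)
  utility_inv : ∀ g i s, u (actI g i) (actS g s) = u i s

/-- The strategy map `C i → C (g·i)` induced by a game action: send `r : C i` to the
`(g·i)`-coordinate of `g·s` for any profile `s` with `s i = r`.  (By the `diagonal`
property this does not depend on the choice of `s`.) -/
noncomputable def stratMap {G : Type*} [Group G] {I : Type*} {C : I → Type*}
    [∀ i, Nonempty (C i)] {u : ∀ i : I, (∀ j, C j) → ℝ}
    (A : GameAction G C u) (g : G) (i : I) (r : C i) : C (A.actI g i) :=
  A.actS g (Function.update (fun j => Classical.arbitrary (C j)) i r) (A.actI g i)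

/-- The induced action of `g` on the minimizer's strategies
`⨆ i, C i × C i` of the auxiliary zero-sum game `Γ⁰`:
`g·(s,(rᵢ,tᵢ)) = (g·s, (g·rᵢ, g·tᵢ))`. -/
noncomputable def minAct {G : Type*} [Group G] {I : Type*} {C : I → Type*}
    [∀ i, Nonempty (C i)] {u : ∀ i : I, (∀ j, C j) → ℝ}
    (A : GameAction G C u) (g : G) (p : Σ i : I, C i × C i) : Σ i : I, C i × C i :=
  ⟨A.actI g p.1, (stratMap A g p.1 p.2.1, stratMap A g p.1 p.2.2)⟩


section Aux

variable {G : Type*} [Group G] {I : Type*} {C : I → Type*}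
    [∀ i, Nonempty (C i)] {u : ∀ i : I, (∀ j, C j) → ℝ}

lemma stratMap_apply (A : GameAction G C u) (g : G) (i : I) (s : ∀ j, C j) :
    stratMap A g i (s i) = A.actS g s (A.actI g i) :=
  A.diagonal g _ s i (Function.update_self i (s i) _)

lemma actI_inj (A : GameAction G C u) (g : G) {i j : I}
    (h : A.actI g i = A.actI g j) : i = j := by
  have := congrArg (A.actI g⁻¹) h
  rwa [← A.actI_mul, ← A.actI_mul, inv_mul_cancel, A.actI_one, A.actI_one] at this

lemma stratMap_inj (A : GameAction G C u) (g : G) (i : I) {r r' : C i}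
    (h : stratMap A g i r = stratMap A g i r') : r = r' := by
  unfold stratMap at h
  have h2 := A.diagonal g⁻¹ _ _ (A.actI g i) h
  rw [← A.actS_mul, ← A.actS_mul, ← A.actI_mul, inv_mul_cancel, A.actS_one, A.actS_one,
    A.actI_one] at h2
  simpa using h2

lemma actS_update (A : GameAction G C u) (g : G) (s : ∀ j, C j) (i : I) (t : C i) :
    A.actS g (Function.update s i t) =
      Function.update (A.actS g s) (A.actI g i) (stratMap A g i t) := by
  funext k
  have hk : k = A.actI g (A.actI g⁻¹ k) := by
    rw [← A.actI_mul, mul_inv_cancel, A.actI_one]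
  rw [hk]
  rcases eq_or_ne (A.actI g⁻¹ k) i with hj | hj
  · rw [hj, Function.update_self]
    have := stratMap_apply A g i (Function.update s i t)
    rw [Function.update_self] at this
    exact this.symm
  · rw [Function.update_of_ne (fun hc => hj (actI_inj A g hc))]
    exact A.diagonal g _ s _ (Function.update_of_ne hj t s)

lemma sigma_prod_ext {i i' : I} (h : i = i') {a b : C i} {a' b' : C i'}
    (ha : HEq a a') (hb : HEq b b') :
    (⟨i, (a, b)⟩ : Σ j : I, C j × C j) = ⟨i', (a', b')⟩ := by
  subst h
  rw [eq_of_heq ha, eq_of_heq hb]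

lemma stratMap_one_heq (A : GameAction G C u) (i : I) (r : C i) :
    HEq (stratMap A 1 i r) r := by
  have h1 : stratMap A 1 i r =
      (Function.update (fun j => Classical.arbitrary (C j)) i r) (A.actI 1 i) := by
    unfold stratMap; rw [A.actS_one]
  have h2 := congr_arg_heq (Function.update (fun j => Classical.arbitrary (C j)) i r)
    (A.actI_one i)
  rw [Function.update_self] at h2
  rw [h1]
  exact h2

lemma stratMap_mul_heq (A : GameAction G C u) (g h : G) (i : I) (r : C i) :
    HEq (stratMap A (g * h) i r) (stratMap A g (A.actI h i) (stratMap A h i r)) := by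
  have h1 : stratMap A (g * h) i r =
      A.actS g (A.actS h (Function.update (fun j => Classical.arbitrary (C j)) i r))
        (A.actI (g * h) i) := by
    unfold stratMap; rw [A.actS_mul]
  have h2 : stratMap A g (A.actI h i) (stratMap A h i r) =
      A.actS g (A.actS h (Function.update (fun j => Classical.arbitrary (C j)) i r))
        (A.actI g (A.actI h i)) := by
    have := stratMap_apply A g (A.actI h i)
      (A.actS h (Function.update (fun j => Classical.arbitrary (C j)) i r))
    exact this
  rw [h1, h2]
  exact congr_arg_heq _ (A.actI_mul g h i)

end Aux

/-- If `G` acts on `Γ` then `g·(s,(rᵢ,tᵢ)) = (g·s,(g·rᵢ,g·tᵢ))` defines a (player-trivial)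
action of `G` on the zero-sum game `Γ⁰` (the maximizer's strategies are acted on by
`A.actS`, which is a left action by assumption, and the minimizer's strategies by
`minAct`, which the first two conjuncts assert is a left action); in particular the
maximizer's utility `u_M⁰` is invariant. -/
theorem gamma0_action {G : Type*} [Group G] [Fintype G]
    {I : Type*} [Fintype I] {C : I → Type*} [∀ i, Fintype (C i)] [∀ i, Nonempty (C i)]
    (hI : 2 ≤ Fintype.card I) (hC : ∀ i, 2 ≤ Fintype.card (C i))
    (u : ∀ i : I, (∀ j, C j) → ℝ) (A : GameAction G C u) :
    (∀ p : Σ i : I, C i × C i, minAct A 1 p = p) ∧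
    (∀ (g h : G) (p : Σ i : I, C i × C i),
      minAct A (g * h) p = minAct A g (minAct A h p)) ∧
    (∀ (g : G) (s : ∀ j, C j) (i : I) (r t : C i),
      uM0 u (A.actS g s) (minAct A g ⟨i, (r, t)⟩) = uM0 u s ⟨i, (r, t)⟩) :=  by
  refine ⟨fun p => ?_, fun g h p => ?_, fun g s i r t => ?_⟩
  · obtain ⟨i, r, t⟩ := p
    exact sigma_prod_ext (A.actI_one i) (stratMap_one_heq A i r) (stratMap_one_heq A i t)
  · obtain ⟨i, r, t⟩ := p
    exact sigma_prod_ext (A.actI_mul g h i) (stratMap_mul_heq A g h i r)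
      (stratMap_mul_heq A g h i t)
  · have hcond : (stratMap A g i r = A.actS g s (A.actI g i)) ↔ r = s i := by
      rw [← stratMap_apply A g i s]
      exact ⟨fun hh => stratMap_inj A g i hh, fun hh => by rw [hh]⟩
    simp only [uM0, minAct, ← actS_update A g s i t, hcond, A.utility_inv]
end

section
/- If a finite group G acts player trivially on a zero-sum game Γ, then a set Σ ⊆ Δ_G(C_M) of G-invariant maximizer strategies is good if and only if it is good against Δ_G(C_m), the set of G-invariant minimizer strategies. -/
open Finset
open scoped Classical BigOperators

/-- If a finite group `G` acts player trivially on a zero-sum game (`G` acts on both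
strategy sets, with `u` invariant), then a set `Σ` of `G`-invariant maximizer mixed
strategies is good if and only if it is good against the `G`-invariant minimizer mixed
strategies. -/
theorem good_iff_goodAgainst_invariant
    {G A B : Type*} [Group G] [Fintype G] [Fintype A] [Fintype B]
    [MulAction G A] [MulAction G B]
    (hA : 2 ≤ Fintype.card A) (hB : 2 ≤ Fintype.card B)
    (u : A → B → ℝ) (hu : ∀ (g : G) (a : A) (b : B), u (g • a) (g • b) = u a b)
    (S : Set (A → ℝ))
    (hS : S ⊆ {σ ∈ stdSimplex ℝ A | ∀ g : G, (fun a => σ (g • a)) = σ}) :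
    IsGood u S ↔
      GoodAgainst u S {θ ∈ stdSimplex ℝ B | ∀ g : G, (fun b => θ (g • b)) = θ} := by
  constructor
  · intro h θ hθ
    exact h θ hθ.1
  · intro h θ hθ
    set n : ℝ := (Fintype.card G : ℝ) with hn
    have hnpos : (0 : ℝ) < n := by
      simpa [hn] using (Nat.cast_pos.2 Fintype.card_pos : (0:ℝ) < Fintype.card G)
    set θbar : B → ℝ := fun b => (∑ g : G, θ (g • b)) / n with hθbar
    have hsum : ∀ g : G, ∑ b, θ (g • b) = ∑ b, θ b := fun g =>
      Fintype.sum_bijective (g • ·) (MulAction.bijective g) _ _ fun b => rfl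
    have hθbar_mem : θbar ∈ stdSimplex ℝ B := by
      constructor
      · intro b
        apply div_nonneg _ hnpos.le
        exact Finset.sum_nonneg fun g _ => hθ.1 _
      · have h1 : ∑ b, θbar b = (∑ b, ∑ g : G, θ (g • b)) / n := by
          simp [hθbar, Finset.sum_div]
        rw [h1, Finset.sum_comm]
        simp only [hsum]
        rw [hθ.2]
        simp [hn, div_self hnpos.ne']
    have hθbar_inv : ∀ g : G, (fun b => θbar (g • b)) = θbar := by
      intro g
      funext b
      simp only [hθbar]
      congr 1
      exact Fintype.sum_bijective (· * g) (Group.mulRight_bijective g) _ _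
        fun h => by rw [mul_smul]
    obtain ⟨σ, hσS, hσg⟩ := h θbar ⟨hθbar_mem, hθbar_inv⟩
    refine ⟨σ, hσS, ?_⟩
    have hσinv := (hS hσS).2
    have hg : ∀ g : G, ∑ a, ∑ b, σ a * θ (g • b) * u a b = expPay u σ θ := by
      intro g
      simp only [expPay]
      refine Fintype.sum_equiv (MulAction.toPerm g) _ _ fun a => ?_
      refine Fintype.sum_equiv (MulAction.toPerm g) _ _ fun b => ?_
      simp only [MulAction.toPerm_apply]
      rw [congrFun (hσinv g) a, hu g a b]
    have key : expPay u σ θbar = expPay u σ θ := by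
      have h1 : expPay u σ θbar * n = expPay u σ θ * n := by
        calc expPay u σ θbar * n
            = ∑ a, ∑ b, ∑ g : G, σ a * θ (g • b) * u a b := by
              simp only [expPay, Finset.sum_mul, hθbar]
              refine Finset.sum_congr rfl fun a _ => Finset.sum_congr rfl fun b _ => ?_
              have h2 : σ a * ((∑ g : G, θ (g • b)) / n) * u a b * n
                  = σ a * (∑ g : G, θ (g • b)) * u a b := by
                field_simp
              rw [h2, Finset.mul_sum, Finset.sum_mul]
          _ = ∑ a, ∑ g : G, ∑ b, σ a * θ (g • b) * u a b :=
              Finset.sum_congr rfl fun a _ => Finset.sum_comm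
          _ = ∑ g : G, ∑ a, ∑ b, σ a * θ (g • b) * u a b := Finset.sum_comm
          _ = expPay u σ θ * n := by
              simp only [hg]
              rw [Finset.sum_const, Finset.card_univ, nsmul_eq_mul, hn, mul_comm]
      exact mul_right_cancel₀ hnpos.ne' h1
    have h2 : gameValue u ≤ expPay u σ θbar := hσg
    exact (key ▸ h2 : gameValue u ≤ expPay u σ θ)
end
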